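/- arXiv:0805.1759 — 4 statements merged into one kernel-verified Lean document; each statement's English description precedes it below -/
import Mathlib

section
/- For the functions cost and clicks of a query landscape: (1) the pair (cost(x), clicks(x)) takes values in the finite set {(α[i]·b[i], α[i]) : 1 ≤ i ≤ S}; (2) cost(x) and clicks(x) are nondecreasing functions of x; and (3) whenever clicks(x) > 0, the cost-per-click cost(x)/clicks(x) is nondecreasing in x and satisfies cost(x)/clicks(x) ≤ x. -/
/-!
A query landscape has `n+1` positions with click-through rates
`α 0 ≥ α 1 ≥ … ≥ α n = 0` and competing bids `b 0 ≥ b 1 ≥ … ≥ b n = 0`.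
For a bid `x ≥ 0` the position won is the least index `i` with `b i ≤ x`;
`cost x = α i * b i` and `clicks x = α i` for that index.
-/

noncomputable def landPos (n : ℕ) (b : Fin (n + 1) → ℝ) (x : ℝ) : Fin (n + 1) :=
  if h : (Finset.univ.filter (fun i => b i ≤ x)).Nonempty
  then (Finset.univ.filter (fun i => b i ≤ x)).min' h
  else Fin.last n

noncomputable def landClicks (n : ℕ) (α b : Fin (n + 1) → ℝ) (x : ℝ) : ℝ :=
  α (landPos n b x)

noncomputable def landCost (n : ℕ) (α b : Fin (n + 1) → ℝ) (x : ℝ) : ℝ :=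
  α (landPos n b x) * b (landPos n b x)

lemma landPos_spec (n : ℕ) (b : Fin (n + 1) → ℝ) (hb0 : b (Fin.last n) = 0)
    {x : ℝ} (hx : 0 ≤ x) : b (landPos n b x) ≤ x := by
  have hne : (Finset.univ.filter (fun i => b i ≤ x)).Nonempty :=
    ⟨Fin.last n, by simp [hb0, hx]⟩
  have := Finset.min'_mem _ hne
  simp only [Finset.mem_filter] at this
  simpa [landPos, dif_pos hne] using this.2

lemma landPos_anti (n : ℕ) (b : Fin (n + 1) → ℝ) (hb0 : b (Fin.last n) = 0)
    {x y : ℝ} (hx : 0 ≤ x) (hxy : x ≤ y) : landPos n b y ≤ landPos n b x := by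
  have hnex : (Finset.univ.filter (fun i => b i ≤ x)).Nonempty :=
    ⟨Fin.last n, by simp [hb0, hx]⟩
  have hney : (Finset.univ.filter (fun i => b i ≤ y)).Nonempty :=
    ⟨Fin.last n, by simp [hb0, hx.trans hxy]⟩
  have hmem : landPos n b x ∈ Finset.univ.filter (fun i => b i ≤ y) := by
    simp only [Finset.mem_filter, Finset.mem_univ, true_and]
    exact (landPos_spec n b hb0 hx).trans hxy
  simp only [landPos, dif_pos hnex, dif_pos hney]
  exact Finset.min'_le _ _ (by simpa [landPos, dif_pos hnex] using hmem)

/-- (1) `(cost x, clicks x)` lies in the finite set of landscape points;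
    (2) `cost` and `clicks` are nondecreasing on nonnegative bids;
    (3) when `clicks x > 0`, the cost-per-click `cost x / clicks x` is
    nondecreasing and is at most the bid `x`. -/
theorem landscape_basic_properties (n : ℕ) (α b : Fin (n + 1) → ℝ)
    (hα : Antitone α) (hb : Antitone b)
    (hα0 : α (Fin.last n) = 0) (hb0 : b (Fin.last n) = 0) :
    (∀ x : ℝ, 0 ≤ x → ∃ i : Fin (n + 1),
        landCost n α b x = α i * b i ∧ landClicks n α b x = α i) ∧
    (∀ x y : ℝ, 0 ≤ x → x ≤ y → landCost n α b x ≤ landCost n α b y) ∧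
    (∀ x y : ℝ, 0 ≤ x → x ≤ y → landClicks n α b x ≤ landClicks n α b y) ∧
    (∀ x y : ℝ, 0 ≤ x → x ≤ y → 0 < landClicks n α b x →
        landCost n α b x / landClicks n α b x ≤
          landCost n α b y / landClicks n α b y) ∧
    (∀ x : ℝ, 0 ≤ x → 0 < landClicks n α b x →
        landCost n α b x / landClicks n α b x ≤ x) := by
  have hαnn : ∀ i, 0 ≤ α i := fun i => hα0 ▸ hα (Fin.le_last i)
  have hbnn : ∀ i, 0 ≤ b i := fun i => hb0 ▸ hb (Fin.le_last i)
  have hclicks : ∀ x y : ℝ, 0 ≤ x → x ≤ y →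
      landClicks n α b x ≤ landClicks n α b y :=
    fun x y hx hxy => hα (landPos_anti n b hb0 hx hxy)
  have hbmono : ∀ x y : ℝ, 0 ≤ x → x ≤ y →
      b (landPos n b x) ≤ b (landPos n b y) :=
    fun x y hx hxy => hb (landPos_anti n b hb0 hx hxy)
  refine ⟨fun x _ => ⟨landPos n b x, rfl, rfl⟩, ?_, hclicks, ?_, ?_⟩
  · intro x y hx hxy
    exact mul_le_mul (hclicks x y hx hxy) (hbmono x y hx hxy)
      (hbnn _) (hαnn _)
  · intro x y hx hxy hpos
    have hposy : 0 < landClicks n α b y := lt_of_lt_of_le hpos (hclicks x y hx hxy)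
    unfold landCost landClicks at *
    rw [mul_div_cancel_left₀ _ hpos.ne', mul_div_cancel_left₀ _ hposy.ne']
    exact hbmono x y hx hxy
  · intro x hx hpos
    unfold landCost landClicks at *
    rw [mul_div_cancel_left₀ _ hpos.ne']
    exact landPos_spec n b hb0 hx
end

section
/- For any budget B ≥ 0, the supremum of clicks(A) over probability distributions A on nonnegative bids satisfying cost(A) ≤ B is attained, and it is attained by a distribution supported on at most two bids; moreover the optimal value equals the maximum of λ·α[i] + (1−λ)·α[j] over indices i, j and λ ∈ [0,1] with λ·cost-point[i] + (1−λ)·cost-point[j] ≤ B, where cost-point[i] = α[i]·b[i] (i.e., the value at B of the concave upper envelope of the landscape points). -/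
open MeasureTheory ProbabilityTheory

section MixtureValues

variable {ι : Type*} (c v : ι → ℝ) (B : ℝ)

def mixtureValues : Set ℝ :=
  {r | ∃ (i j : ι) (t : ℝ), 0 ≤ t ∧ t ≤ 1 ∧ t * c i + (1 - t) * c j ≤ B ∧
    r = t * v i + (1 - t) * v j}

lemma isCompact_mixtureValues [Finite ι] : IsCompact (mixtureValues c v B) := by
  have : mixtureValues c v B = ⋃ p : ι × ι, (fun t => t * v p.1 + (1 - t) * v p.2) ''
      (Set.Icc 0 1 ∩ {t | t * c p.1 + (1 - t) * c p.2 ≤ B}) := by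
    ext r
    simp only [mixtureValues, Set.mem_iUnion, Set.mem_image, Set.mem_inter_iff,
      Set.mem_Icc, Prod.exists]
    grind
  rw [this]
  exact isCompact_iUnion fun p => (isCompact_Icc.inter_right
    (isClosed_le (by fun_prop) continuous_const)).image (by fun_prop)

lemma exists_isGreatest_mixtureValues [Finite ι] {i : ι} (hi : c i ≤ B) :
    ∃ M, IsGreatest (mixtureValues c v B) M :=
  (isCompact_mixtureValues c v B).exists_isGreatest
    ⟨v i, i, i, 1, zero_le_one, le_rfl, by simpa, by simp⟩

variable {c v B} {M : ℝ}

lemma mul_add_mul_le_of_mem_upperBounds_mixtureValues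
    (hM : M ∈ upperBounds (mixtureValues c v B))
    {i j : ι} (hj : c j < B) (hi : B < c i) :
    (B - c j) * v i + (c i - B) * v j ≤ M * (c i - c j) := by
  set t := (B - c j) / (c i - c j)
  have hd : 0 < c i - c j := by linarith
  have ht : t * (c i - c j) = B - c j := div_mul_cancel₀ _ hd.ne'
  have ht0 : 0 ≤ t := div_nonneg (by linarith) hd.le
  have ht1 : t ≤ 1 := (div_le_one hd).2 (by linarith)
  calc (B - c j) * v i + (c i - B) * v j = (t * v i + (1 - t) * v j) * (c i - c j) := by
        linear_combination (v j - v i) * ht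
    _ ≤ M * (c i - c j) :=
        mul_le_mul_of_nonneg_right (hM ⟨i, j, t, ht0, ht1, by nlinarith, rfl⟩) hd.le

lemma mem_upperBounds_mixtureValues_iff [Finite ι] :
    M ∈ upperBounds (mixtureValues c v B) ↔
      ∃ l, 0 ≤ l ∧ ∀ i, v i ≤ M + l * (c i - B) := by
  constructor
  · intro hM
    have hle : ∀ i, c i ≤ B → v i ≤ M := fun i hi =>
      hM ⟨i, i, 1, zero_le_one, le_rfl, by simpa, by simp⟩
    by_cases hH : ∃ i, B < c i
    · obtain ⟨i, hi⟩ := hH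
      have : Nonempty {i // B < c i} := ⟨⟨i, hi⟩⟩
      -- the slope is the steepest one from `(B, M)` to a point beyond the budget
      obtain ⟨⟨i₀, hi₀⟩, hmax⟩ :=
        Finite.exists_max fun i : {i // B < c i} => (v i - M) / (c i - B)
      set s := (v i₀ - M) / (c i₀ - B)
      have hd : 0 < c i₀ - B := by linarith
      have hs : s * (c i₀ - B) = v i₀ - M := div_mul_cancel₀ _ hd.ne'
      refine ⟨max 0 s, le_max_left _ _, fun j => ?_⟩
      rcases lt_trichotomy (c j) B with hj | hj | hj
      · have hpair := mul_add_mul_le_of_mem_upperBounds_mixtureValues hM hj hi₀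
        have hslope : v j ≤ M + s * (c j - B) := by nlinarith
        rcases le_total s 0 with h | h
        · simpa [max_eq_left h] using hle j hj.le
        · simpa [max_eq_right h] using hslope
      · simpa [hj] using hle j hj.le
      · have hj' : 0 < c j - B := by linarith
        have : (v j - M) / (c j - B) ≤ s := hmax ⟨j, hj⟩
        rw [div_le_iff₀ hj'] at this
        nlinarith [le_max_right 0 s]
    · push Not at hH
      exact ⟨0, le_rfl, fun i => by simpa using hle i (hH i)⟩
  · rintro ⟨l, hl, h⟩ _ ⟨i, j, t, ht0, ht1, hB, rfl⟩
    nlinarith [h i, h j]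

end MixtureValues

lemma integral_le_of_ae_le_affine {Ω : Type*} [MeasurableSpace Ω] {μ : Measure Ω}
    [IsProbabilityMeasure μ] {f g : Ω → ℝ} (hf : Integrable f μ) (hg : Integrable g μ)
    {M l B : ℝ} (h : ∀ᵐ z ∂μ, f z ≤ M + l * (g z - B)) :
    ∫ z, f z ∂μ ≤ M + l * (∫ z, g z ∂μ - B) := by
  calc ∫ z, f z ∂μ ≤ ∫ z, M + l * (g z - B) ∂μ := integral_mono_ae hf (by fun_prop) h
    _ = M + l * (∫ z, g z ∂μ - B) := by
        rw [integral_add (by fun_prop) (by fun_prop), integral_const_mul,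
          integral_sub hg (by fun_prop)]
        simp

lemma ofReal_smul_dirac_add_eq_bernoulliMeasure {X : Type*} [MeasurableSpace X] (x y : X)
    {l : ℝ} (hl : l ∈ unitInterval) :
    ENNReal.ofReal l • Measure.dirac x + ENNReal.ofReal (1 - l) • Measure.dirac y
      = Ber(x, y, ⟨l, hl⟩) := by
  rw [bernoulliMeasure_def]
  congr 2 <;> rw [ENNReal.ofReal, ENNReal.coe_inj] <;> ext <;> simp [hl.1, hl.2]

lemma ae_mem_bernoulliMeasure {X : Type*} [MeasurableSpace X] {x y : X} (p : unitInterval)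
    {s : Set X} (hs : MeasurableSet s) (hx : x ∈ s) (hy : y ∈ s) :
    ∀ᵐ z ∂Ber(x, y, p), z ∈ s :=
  ae_iff.2 (bernoulliMeasure_apply_of_notMem_of_notMem p hs.compl (by simpa) (by simpa))

section Landscape

variable {n : ℕ} {α b : Fin (n + 1) → ℝ} {x : ℝ} {i : Fin (n + 1)}

lemma landPos_eq_min' (h : b i ≤ x) :
    ∃ hne, landPos n b x = (Finset.univ.filter (fun i => b i ≤ x)).min' hne :=
  ⟨⟨i, by simpa⟩, dif_pos _⟩

lemma landPos_le_of_le (h : b i ≤ x) : landPos n b x ≤ i := by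
  obtain ⟨hne, he⟩ := landPos_eq_min' h
  exact he ▸ Finset.min'_le _ _ (by simpa)

lemma apply_landPos_le_of_le (h : b i ≤ x) : b (landPos n b x) ≤ x := by
  obtain ⟨hne, he⟩ := landPos_eq_min' h
  simpa [he] using Finset.min'_mem _ hne

lemma landPos_apply_landPos (h : b i ≤ x) : landPos n b (b (landPos n b x)) = landPos n b x :=
  le_antisymm (landPos_le_of_le le_rfl)
    (landPos_le_of_le ((apply_landPos_le_of_le le_rfl).trans (apply_landPos_le_of_le h)))

lemma landPos_of_forall_lt (h : ∀ i, x < b i) : landPos n b x = Fin.last n :=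
  dif_neg fun ⟨i, hi⟩ => (h i).not_ge (by simpa using hi)

lemma antitone_landPos : Antitone (landPos n b) := by
  intro x y hxy
  by_cases h : ∃ i, b i ≤ x
  · obtain ⟨i, hi⟩ := h
    exact landPos_le_of_le ((apply_landPos_le_of_le hi).trans hxy)
  · push Not at h
    exact (landPos_of_forall_lt h).symm ▸ Fin.le_last _

lemma integrable_comp_landPos {g : Fin (n + 1) → ℝ} (hg : Antitone g) (μ : Measure ℝ)
    [IsFiniteMeasure μ] : Integrable (fun x => g (landPos n b x)) μ :=
  .of_mem_Icc (g (Fin.last n)) (g 0) (hg.comp antitone_landPos).measurable.aemeasurable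
    (.of_forall fun _ => ⟨hg (Fin.le_last _), hg (Fin.zero_le _)⟩)

lemma landClicks_le_of_forall_bid (hb0 : b (Fin.last n) = 0) {M l B : ℝ}
    (h : ∀ k, landClicks n α b (b k) ≤ M + l * (landCost n α b (b k) - B)) (hx : 0 ≤ x) :
    landClicks n α b x ≤ M + l * (landCost n α b x - B) := by
  simpa only [landClicks, landCost, landPos_apply_landPos (i := Fin.last n) (hb0 ▸ hx)]
    using h (landPos n b x)

lemma landCost_zero_nonpos (hα : ∀ k, 0 ≤ α k) (hb0 : b (Fin.last n) = 0) :
    landCost n α b 0 ≤ 0 :=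
  mul_nonpos_of_nonneg_of_nonpos (hα _) (apply_landPos_le_of_le (i := Fin.last n) hb0.le)

lemma le_of_forall_nonneg_landClicks_le (hα : Antitone α) (hα' : ∀ k, 0 ≤ α k)
    (hb : Antitone b) (hb0 : b (Fin.last n) = 0) {M l B : ℝ} (hl : 0 ≤ l)
    (h : ∀ x, 0 ≤ x → landClicks n α b x ≤ M + l * (landCost n α b x - B))
    (i : Fin (n + 1)) :
    α i ≤ M + l * (α i * b i - B) := by
  -- The bid `b i` wins a position `k ≤ i` at the same price, so `(α i * b i, α i)` is a
  -- shrinking of the achievable point `(α k * b i, α k)` towards the origin, where the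
  -- majorant is `≥ 0`.
  have hk : landPos n b (b i) ≤ i := landPos_le_of_le le_rfl
  have hbk : b (landPos n b (b i)) = b i := le_antisymm (apply_landPos_le_of_le le_rfl) (hb hk)
  have hbid := h (b i) (hb0 ▸ hb (Fin.le_last i))
  simp only [landClicks, landCost, hbk] at hbid
  have hzero : 0 ≤ M - l * B := by
    have h0 := h 0 le_rfl
    rw [landClicks] at h0
    nlinarith [mul_nonpos_of_nonneg_of_nonpos hl (landCost_zero_nonpos hα' hb0),
      hα' (landPos n b 0)]
  rcases le_total (l * b i) 1 with hlb | hlb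
  · nlinarith [mul_le_mul_of_nonneg_right (hα hk) (sub_nonneg.2 hlb)]
  · nlinarith [mul_nonneg (hα' i) (sub_nonneg.2 hlb)]

lemma integral_landClicks_le (hα : Antitone α) (hα' : ∀ k, 0 ≤ α k) (hb : Antitone b)
    (hb' : ∀ k, 0 ≤ b k) {ν : Measure ℝ} [IsProbabilityMeasure ν] {M l B : ℝ}
    (h : ∀ᵐ x ∂ν, landClicks n α b x ≤ M + l * (landCost n α b x - B)) :
    ∫ x, landClicks n α b x ∂ν ≤ M + l * (∫ x, landCost n α b x ∂ν - B) :=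
  integral_le_of_ae_le_affine (integrable_comp_landPos hα ν)
    (integrable_comp_landPos (g := fun k => α k * b k)
      (fun p q hpq => mul_le_mul (hα hpq) (hb hpq) (hb' q) (hα' p)) ν) h

end Landscape

/-- For any budget `B ≥ 0`, the supremum of expected clicks over probability
distributions on nonnegative bids with expected cost at most `B` is attained
by a distribution supported on at most two bids, and the optimal value is the
maximum of `λ·α i + (1−λ)·α j` over convex combinations of two landscape
points whose cost combination is within budget. -/
theorem single_query_two_point_optimum (n : ℕ) (α b : Fin (n + 1) → ℝ)
    (hα : Antitone α) (hb : Antitone b)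
    (hα0 : α (Fin.last n) = 0) (hb0 : b (Fin.last n) = 0)
    (B : ℝ) (hB : 0 ≤ B) :
    ∃ x y l : ℝ, 0 ≤ x ∧ 0 ≤ y ∧ 0 ≤ l ∧ l ≤ 1 ∧
      (let μ : Measure ℝ :=
        ENNReal.ofReal l • Measure.dirac x + ENNReal.ofReal (1 - l) • Measure.dirac y
      (∫ z, landCost n α b z ∂μ) ≤ B ∧
      IsGreatest {r : ℝ | ∃ ν : Measure ℝ, IsProbabilityMeasure ν ∧
          (∀ᵐ z ∂ν, 0 ≤ z) ∧ (∫ z, landCost n α b z ∂ν) ≤ B ∧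
          r = ∫ z, landClicks n α b z ∂ν}
        (∫ z, landClicks n α b z ∂μ) ∧
      IsGreatest {r : ℝ | ∃ (i j : Fin (n + 1)) (t : ℝ), 0 ≤ t ∧ t ≤ 1 ∧
          t * (α i * b i) + (1 - t) * (α j * b j) ≤ B ∧
          r = t * α i + (1 - t) * α j}
        (∫ z, landClicks n α b z ∂μ)) := by
  have hα' : ∀ k, 0 ≤ α k := fun k => hα0 ▸ hα (Fin.le_last k)
  have hb' : ∀ k, 0 ≤ b k := fun k => hb0 ▸ hb (Fin.le_last k)
  obtain ⟨M, ⟨i, j, t, ht0, ht1, hcost, hM⟩, hMmax⟩ :=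
    exists_isGreatest_mixtureValues (fun k => landCost n α b (b k))
      (fun k => landClicks n α b (b k)) B (i := Fin.last n)
      (by simpa [hb0] using (landCost_zero_nonpos hα' hb0).trans hB)
  beta_reduce at hcost hM
  obtain ⟨l, hl, hmaj⟩ := mem_upperBounds_mixtureValues_iff.1 hMmax
  have hbid (x : ℝ) (hx : 0 ≤ x) := landClicks_le_of_forall_bid hb0 hmaj hx
  have hcostBer : ∫ z, landCost n α b z ∂Ber(b i, b j, ⟨t, ht0, ht1⟩) ≤ B := by
    simpa only [integral_bernoulliMeasure, smul_eq_mul] using hcost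
  have hclicksBer : ∫ z, landClicks n α b z ∂Ber(b i, b j, ⟨t, ht0, ht1⟩) = M := by
    simpa only [integral_bernoulliMeasure, smul_eq_mul] using hM.symm
  refine ⟨b i, b j, t, hb' i, hb' j, ht0, ht1, ?_⟩
  dsimp only
  rw [ofReal_smul_dirac_add_eq_bernoulliMeasure _ _ ⟨ht0, ht1⟩, hclicksBer]
  refine ⟨hcostBer,
    ⟨⟨_, inferInstance, ae_mem_bernoulliMeasure _ measurableSet_Ici (hb' i) (hb' j), hcostBer,
      hclicksBer.symm⟩, ?_⟩,
    ⟨landPos n b (b i), landPos n b (b j), t, ht0, ht1, hcost, hM⟩,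
    mem_upperBounds_mixtureValues_iff.2
      ⟨l, hl, le_of_forall_nonneg_landClicks_le hα hα' hb hb0 hl hbid⟩⟩
  rintro r ⟨ν, hν, hae, hνB, rfl⟩
  have := integral_landClicks_le hα hα' hb hb' (hae.mono hbid)
  nlinarith
end

section
/- Suppose the single-slot price-setting mechanism is run on the truthful input (each bidder declaring her true max-cpc m_i and budget B_i), resulting in price p and click allocation c_1, …, c_n. Then for every ε > 0 there exists a profile of declarations (with budgets declared truthfully) that is a pure-strategy ε-Nash equilibrium of the greedy first-price mechanism and in which each bidder i receives between c_i − ε and c_i + ε clicks. -/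
/-!
Single slot with `D > 0` clicks, `n > 1` bidders.  We define both the
price-setting (PS) mechanism and the greedy first-price (GFP) mechanism.
Bidders are ordered by declared bid, decreasing, ties broken by the fixed
(index) order.
-/

/-- 0-based rank of bidder `i` when sorting by `key`, decreasing, ties broken
by the fixed lexicographic (index) order. -/
noncomputable def rankBy (n : ℕ) (key : Fin n → ℝ) (i : Fin n) : ℕ :=
  (Finset.univ.filter (fun j => key i < key j ∨ (key j = key i ∧ j < i))).card

/-- The key value at 0-based rank `t` (the `(t+1)`-st highest), or `0` if
there is no such bidder. -/
noncomputable def nthKey (n : ℕ) (key : Fin n → ℝ) (t : ℕ) : ℝ :=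
  if h : (Finset.univ.filter (fun i => t ≤ rankBy n key i)).Nonempty
  then (Finset.univ.filter (fun i => t ≤ rankBy n key i)).sup' h key
  else 0

/-- Value of `f` at the bidder whose 0-based rank (by `key`) is `t`, or `0` if
there is no such bidder. -/
noncomputable def atRank (n : ℕ) (key f : Fin n → ℝ) (t : ℕ) : ℝ :=
  if h : (Finset.univ.filter (fun i => rankBy n key i = t)).Nonempty
  then f ((Finset.univ.filter (fun i => rankBy n key i = t)).min' h)
  else 0

/-- Total declared budget of the `t` highest-ranked bidders (by bid). -/
noncomputable def prefBudget (n : ℕ) (bid bud : Fin n → ℝ) (t : ℕ) : ℝ :=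
  ∑ i ∈ Finset.univ.filter (fun i => rankBy n bid i < t), bud i

open Classical in
/-- The index `k` of the PS mechanism: the least `t ≥ 1` such that the
`(t+1)`-st highest bid is at most `(Σ_{i=1}^t B̂_i)/D` (with `t = n` as a
defensive fallback; for positive budgets the condition always holds at `n`). -/
noncomputable def psK (n : ℕ) (D : ℝ) (bid bud : Fin n → ℝ) : ℕ :=
  Nat.find (p := fun t =>
      (1 ≤ t ∧ nthKey n bid t ≤ prefBudget n bid bud t / D) ∨ t = n)
    ⟨n, Or.inr rfl⟩

/-- The PS price: `p = min((Σ_{i=1}^k B̂_i)/D, b_{(k)})`. -/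
noncomputable def psPrice (n : ℕ) (D : ℝ) (bid bud : Fin n → ℝ) : ℝ :=
  min (prefBudget n bid bud (psK n D bid bud) / D)
    (nthKey n bid (psK n D bid bud - 1))

/-- Clicks allocated to bidder `i` by the PS mechanism. -/
noncomputable def psClicks (n : ℕ) (D : ℝ) (bid bud : Fin n → ℝ) (i : Fin n) : ℝ :=
  if psPrice n D bid bud ≤ 0 then 0
  else if rankBy n bid i + 1 < psK n D bid bud then bud i / psPrice n D bid bud
  else if rankBy n bid i + 1 = psK n D bid bud then
    (psPrice n D bid bud * D - prefBudget n bid bud (psK n D bid bud - 1)) /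
      psPrice n D bid bud
  else 0

/-- Total clicks allocated by the greedy first-price mechanism to the bidders
of rank `< t`. -/
noncomputable def gfpBefore (n : ℕ) (D : ℝ) (bid bud : Fin n → ℝ) : ℕ → ℝ
  | 0 => 0
  | t + 1 => gfpBefore n D bid bud t +
      min (atRank n bid bud t / atRank n bid bid t)
        (D - gfpBefore n D bid bud t)

/-- Clicks allocated to bidder `i` by the greedy first-price mechanism:
processing bidders in decreasing order of bid, `c_i = min{B̂_i/b_i, D − Σ_{i'
before i} c_{i'}}`, at per-click price `b_i`. -/
noncomputable def gfpClicks (n : ℕ) (D : ℝ) (bid bud : Fin n → ℝ) (i : Fin n) : ℝ :=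
  min (bud i / bid i) (D - gfpBefore n D bid bud (rankBy n bid i))

/-- Click-maximizing GFP utility of bidder `i` with true max-cpc `m` and true
budget `B`: clicks received if the per-click price `bid i` is at most `m` and
the total payment is within `B` (and `0` if unallocated), `−∞` otherwise. -/
noncomputable def gfpUtil (n : ℕ) (D : ℝ) (m B : ℝ) (bid bud : Fin n → ℝ)
    (i : Fin n) : EReal :=
  if gfpClicks n D bid bud i = 0 ∨
      (bid i ≤ m ∧ gfpClicks n D bid bud i * bid i ≤ B)
  then (gfpClicks n D bid bud i : EReal) else ⊥

/-!
Let `k` and `p` be the cutoff and the price of the PS mechanism on the truthful input. In the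
equilibrium profile bidder `i` bids `min (m i) (p + δ * (n - rank i))`: just above `p` and
staggered so that GFP serves the top-`k` bidders of PS first, in the PS order, at prices in
`[p, p + δ * n]`; for small `δ` every allocation is then within `ε` of the PS one.
A deviation gains at most `ε`. Bidding at least `p` buys at most `B i / p` clicks; this is the PS
allocation of a top-`k` bidder whom PS does not ration, and only such a bidder can bid above `p`.
Any other deviation ranks the deviator behind all top-`k` bidders but herself (ties at `p` are
broken as in PS), and these buy all but about `ε` of the clicks that PS does not give her.
-/

open Finset Function Filter Topology

section NumAbove

variable {α β : Type*} [Fintype α] [LinearOrder β] {f g : α → β}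

def numAbove (f : α → β) (i : α) : ℕ := #{j | f i < f j}

theorem numAbove_lt_numAbove_iff (hf : Injective f) {i j : α} :
    numAbove f i < numAbove f j ↔ f j < f i := by
  classical
  constructor
  · intro h
    by_contra hji
    rcases (not_lt.1 hji).lt_or_eq with hij | hij
    · have : numAbove f j ≤ numAbove f i := card_le_card fun l hl => by
        simp only [mem_filter, mem_univ, true_and] at hl ⊢
        exact hij.trans hl
      omega
    · rw [hf hij] at h
      exact lt_irrefl _ h
  · intro h
    refine card_lt_card ⟨fun l hl => ?_, fun hsub => ?_⟩
    · simp only [mem_filter, mem_univ, true_and] at hl ⊢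
      exact h.trans hl
    · have hi := hsub (x := i) (by simpa using h)
      simp at hi

theorem numAbove_injective (hf : Injective f) : Injective (numAbove f) := by
  intro i j h
  by_contra hij
  rcases lt_or_gt_of_ne (hf.ne hij) with h' | h'
  · exact (numAbove_lt_numAbove_iff hf).2 h' |>.ne h.symm
  · exact (numAbove_lt_numAbove_iff hf).2 h' |>.ne h

theorem numAbove_lt_card (i : α) : numAbove f i < Fintype.card α :=
  card_lt_card ⟨subset_univ _, fun h => by simpa using h (mem_univ i)⟩

theorem exists_numAbove_eq (hf : Injective f) {t : ℕ} (ht : t < Fintype.card α) :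
    ∃ i, numAbove f i = t := by
  let r : α → Fin (Fintype.card α) := fun i => ⟨numAbove f i, numAbove_lt_card i⟩
  have hr : Bijective r := (Fintype.bijective_iff_injective_and_card r).2
    ⟨fun i j h => numAbove_injective hf (congrArg Fin.val h), by simp⟩
  obtain ⟨i, hi⟩ := hr.2 ⟨t, ht⟩
  exact ⟨i, congrArg Fin.val hi⟩

theorem numAbove_eq_of_lt_imp_lt (hf : Injective f) (h : ∀ i j, f i < f j → g i < g j) :
    numAbove g = numAbove f := by
  have hiff : ∀ i j, g i < g j ↔ f i < f j := by
    refine fun i j => ⟨fun hg => ?_, h i j⟩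
    rcases lt_trichotomy (f i) (f j) with hlt | heq | hgt
    · exact hlt
    · exact absurd hg (by rw [hf heq]; exact lt_irrefl _)
    · exact absurd hg (h j i hgt).asymm
  funext i
  simp only [numAbove, hiff]

end NumAbove

section Inequalities

theorem sum_div_le_sum_div {ι : Type*} {s : Finset ι} {f g : ι → ℝ} {c : ℝ}
    (hf : ∀ i ∈ s, 0 ≤ f i) (hg : ∀ i ∈ s, 0 < g i ∧ g i ≤ c) :
    (∑ i ∈ s, f i) / c ≤ ∑ i ∈ s, f i / g i := by
  rw [sum_div]
  exact sum_le_sum fun i hi => div_le_div_of_nonneg_left (hf i hi) (hg i hi).1 (hg i hi).2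

theorem sum_div_le_div_of_le {ι : Type*} {s : Finset ι} {f g : ι → ℝ} {c : ℝ} (hc : 0 < c)
    (hf : ∀ i ∈ s, 0 ≤ f i) (hg : ∀ i ∈ s, c ≤ g i) :
    ∑ i ∈ s, f i / g i ≤ (∑ i ∈ s, f i) / c := by
  rw [sum_div]
  exact sum_le_sum fun i hi => div_le_div_of_nonneg_left (hf i hi) hc (hg i hi)

theorem div_sub_div_le_div_sub_div {x y p q : ℝ} (hp : 0 < p) (hpq : p ≤ q) (hxy : x ≤ y) :
    x / p - x / q ≤ y / p - y / q := by
  have h := mul_le_mul_of_nonneg_right hxy (sub_nonneg.2 (one_div_le_one_div_of_le hp hpq))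
  calc x / p - x / q = x * (1 / p - 1 / q) := by ring
    _ ≤ y * (1 / p - 1 / q) := h
    _ = y / p - y / q := by ring

theorem le_div_of_mul_le_of_le {c b x p : ℝ} (hp : 0 < p) (hpb : p ≤ b) (hx : 0 ≤ x)
    (h : c * b ≤ x) : c ≤ x / p :=
  ((le_div_iff₀ (hp.trans_le hpb)).2 h).trans (div_le_div_of_nonneg_left hx hp hpb)

theorem exists_pos_div_sub_div_add_mul_le {p : ℝ} (hp : 0 < p) (y c : ℝ) {ε : ℝ}
    (hε : 0 < ε) :
    ∃ δ > 0, y / p - y / (p + δ * c) ≤ ε := by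
  have hcont : ContinuousAt (fun δ : ℝ => y / p - y / (p + δ * c)) 0 := by
    fun_prop (disch := simp [hp.ne'])
  have hlim : ∀ᶠ δ in 𝓝 (0 : ℝ), y / p - y / (p + δ * c) < ε := by
    refine hcont.eventually (gt_mem_nhds ?_)
    simpa using hε
  obtain ⟨δ, hδε, hδ⟩ := ((eventually_nhdsWithin_of_eventually_nhds hlim).and
    (self_mem_nhdsWithin : ∀ᶠ δ in 𝓝[>] (0 : ℝ), 0 < δ)).exists
  exact ⟨δ, hδ, hδε.le⟩

theorem min_add_min_sub_min {D a x : ℝ} (hx : 0 ≤ x) :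
    min D a + min x (D - min D a) = min D (a + x) := by
  rcases le_total D a with h | h
  · rw [min_eq_left h, sub_self, min_eq_right hx, min_eq_left (by linarith), add_zero]
  · rw [min_eq_right h]
    rcases le_total x (D - a) with h' | h'
    · rw [min_eq_left h', min_eq_right (by linarith)]
    · rw [min_eq_right h', min_eq_left (by linarith)]
      ring

end Inequalities

section Rank

variable {n : ℕ} {key f : Fin n → ℝ} {i j : Fin n} {t : ℕ}

/-- `rankBy` ranks by this key, decreasingly: higher `key` first, ties to the smaller index. -/
def rankKey (key : Fin n → ℝ) (i : Fin n) : ℝ ×ₗ (Fin n)ᵒᵈ :=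
  toLex (key i, OrderDual.toDual i)

theorem rankKey_lt_rankKey_iff :
    rankKey key i < rankKey key j ↔ key i < key j ∨ key i = key j ∧ j < i :=
  Prod.Lex.toLex_lt_toLex

theorem rankKey_injective : Injective (rankKey key) := fun _ _ h =>
  OrderDual.toDual.injective (congrArg Prod.snd (toLex.injective h))

theorem rankBy_eq_numAbove : rankBy n key = numAbove (rankKey key) := by
  funext i
  simp only [rankBy, numAbove, rankKey_lt_rankKey_iff, eq_comm]

theorem rankBy_lt_rankBy_iff :
    rankBy n key i < rankBy n key j ↔ rankKey key j < rankKey key i := by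
  rw [rankBy_eq_numAbove, numAbove_lt_numAbove_iff rankKey_injective]

theorem rankBy_injective : Injective (rankBy n key) := by
  rw [rankBy_eq_numAbove]
  exact numAbove_injective rankKey_injective

theorem rankBy_lt (i : Fin n) : rankBy n key i < n := by
  simpa [rankBy_eq_numAbove] using numAbove_lt_card (f := rankKey key) i

theorem exists_rankBy_eq (ht : t < n) : ∃ i, rankBy n key i = t := by
  rw [rankBy_eq_numAbove]
  exact exists_numAbove_eq rankKey_injective (by simpa using ht)

theorem key_le_key_of_rankBy_le (h : rankBy n key i ≤ rankBy n key j) : key j ≤ key i := by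
  by_contra hlt
  have : rankBy n key j < rankBy n key i :=
    rankBy_lt_rankBy_iff.2 (rankKey_lt_rankKey_iff.2 (Or.inl (not_le.1 hlt)))
  omega

theorem nthKey_eq_of_rankBy_eq (h : rankBy n key i = t) : nthKey n key t = key i := by
  have hi : i ∈ ({j | t ≤ rankBy n key j} : Finset (Fin n)) := by simp [h]
  rw [nthKey, dif_pos ⟨i, hi⟩]
  refine le_antisymm (sup'_le _ _ fun j hj => key_le_key_of_rankBy_le ?_) (le_sup' key hi)
  simp only [mem_filter, mem_univ, true_and] at hj
  omega

theorem nthKey_of_le (h : n ≤ t) : nthKey n key t = 0 := by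
  rw [nthKey, dif_neg]
  rintro ⟨i, hi⟩
  simp only [mem_filter, mem_univ, true_and] at hi
  have := rankBy_lt (key := key) i
  omega

theorem atRank_eq_of_rankBy_eq (h : rankBy n key i = t) : atRank n key f t = f i := by
  have hi : i ∈ ({j | rankBy n key j = t} : Finset (Fin n)) := by simp [h]
  rw [atRank, dif_pos ⟨i, hi⟩]
  have hmin := min'_mem _ ⟨i, hi⟩
  simp only [mem_filter, mem_univ, true_and] at hmin
  rw [rankBy_injective (hmin.trans h.symm)]

theorem atRank_div (g : Fin n → ℝ) :
    atRank n key (f / g) t = atRank n key f t / atRank n key g t := by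
  unfold atRank
  split_ifs <;> simp

theorem atRank_nonneg (hf : ∀ j, 0 ≤ f j) : 0 ≤ atRank n key f t := by
  unfold atRank
  split_ifs
  exacts [hf _, le_rfl]

theorem prefBudget_succ :
    prefBudget n key f (t + 1) = prefBudget n key f t + atRank n key f t := by
  unfold prefBudget
  by_cases h : ∃ i, rankBy n key i = t
  · obtain ⟨i, rfl⟩ := h
    rw [atRank_eq_of_rankBy_eq rfl, add_comm _ (f i), ← sum_insert (by simp)]
    congr 1
    ext j
    simp only [mem_insert, mem_filter, mem_univ, true_and, Nat.lt_succ_iff, le_iff_lt_or_eq,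
      rankBy_injective.eq_iff, or_comm]
  · rw [atRank, dif_neg (by simpa using h), add_zero]
    congr 1
    ext j
    simp only [mem_filter, mem_univ, true_and, Nat.lt_succ_iff_lt_or_eq, or_iff_left_iff_imp]
    exact fun hj => absurd ⟨j, hj⟩ h

theorem prefBudget_succ_rankBy :
    prefBudget n key f (rankBy n key i + 1) = prefBudget n key f (rankBy n key i) + f i := by
  rw [prefBudget_succ, atRank_eq_of_rankBy_eq rfl]

theorem prefBudget_mono (hf : ∀ j, 0 ≤ f j) : Monotone (prefBudget n key f) := fun s t hst =>
  sum_le_sum_of_subset_of_nonneg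
    (fun j hj => by simp only [mem_filter, mem_univ, true_and] at hj ⊢; omega) fun j _ _ => hf j

theorem le_prefBudget (hf : ∀ j, 0 ≤ f j) (h : rankBy n key i < t) :
    f i ≤ prefBudget n key f t :=
  single_le_sum (fun j _ => hf j) (by simpa using h)

end Rank

section GreedyFirstPrice

variable {n : ℕ} {D : ℝ} {bid bud : Fin n → ℝ} {i : Fin n}

theorem gfpBefore_eq (hD : 0 ≤ D) (hbud : ∀ j, 0 ≤ bud j) (hbid : ∀ j, 0 ≤ bid j)
    (t : ℕ) :
    gfpBefore n D bid bud t = min D (prefBudget n bid (bud / bid) t) := by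
  induction t with
  | zero => simp [gfpBefore, prefBudget, hD]
  | succ t ih =>
    rw [gfpBefore, ih, prefBudget_succ, ← atRank_div, min_add_min_sub_min]
    exact atRank_nonneg fun j => div_nonneg (hbud j) (hbid j)

theorem gfpClicks_eq (hD : 0 ≤ D) (hbud : ∀ j, 0 ≤ bud j) (hbid : ∀ j, 0 ≤ bid j) :
    gfpClicks n D bid bud i =
      min (bud i / bid i) (D - min D (prefBudget n bid (bud / bid) (rankBy n bid i))) := by
  rw [gfpClicks, gfpBefore_eq hD hbud hbid]

theorem gfpClicks_nonneg (hD : 0 ≤ D) (hbud : ∀ j, 0 ≤ bud j) (hbid : ∀ j, 0 ≤ bid j) :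
    0 ≤ gfpClicks n D bid bud i := by
  rw [gfpClicks_eq hD hbud hbid]
  exact le_min (div_nonneg (hbud i) (hbid i)) (sub_nonneg.2 (min_le_left _ _))

theorem gfpClicks_le_of_forall_rankKey_lt (hD : 0 ≤ D) (hbud : ∀ j, 0 ≤ bud j)
    (hbid : ∀ j, 0 ≤ bid j) {T : Finset (Fin n)}
    (hT : ∀ j ∈ T, rankKey bid i < rankKey bid j) :
    gfpClicks n D bid bud i ≤ D - min D (∑ j ∈ T, bud j / bid j) := by
  rw [gfpClicks_eq hD hbud hbid]
  refine (min_le_right _ _).trans (sub_le_sub_left (min_le_min_left D ?_) D)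
  exact sum_le_sum_of_subset_of_nonneg
    (fun j hj => by simpa using rankBy_lt_rankBy_iff.2 (hT j hj))
    fun j _ _ => div_nonneg (hbud j) (hbid j)

theorem gfpUtil_eq_gfpClicks {m B : ℝ} (hpos : 0 < bid i) (hm : bid i ≤ m) (hB : bud i ≤ B) :
    gfpUtil n D m B bid bud i = gfpClicks n D bid bud i := by
  refine if_pos (Or.inr ⟨hm, ?_⟩)
  calc gfpClicks n D bid bud i * bid i ≤ bud i / bid i * bid i :=
        mul_le_mul_of_nonneg_right (min_le_left _ _) hpos.le
    _ = bud i := div_mul_cancel₀ _ hpos.ne'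
    _ ≤ B := hB

theorem gfpUtil_le_coe {m B x : ℝ} (hx : 0 ≤ x)
    (h : bid i ≤ m → gfpClicks n D bid bud i * bid i ≤ B → gfpClicks n D bid bud i ≤ x) :
    gfpUtil n D m B bid bud i ≤ x := by
  rw [gfpUtil]
  split_ifs with hu
  · rcases hu with h0 | ⟨hm, hB⟩
    · rw [h0]
      exact_mod_cast hx
    · exact_mod_cast h hm hB
  · exact bot_le

end GreedyFirstPrice

structure IsClearing (n : ℕ) (D : ℝ) (m B : Fin n → ℝ) (k : ℕ) (p : ℝ) : Prop where
  pos : 0 < p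
  le_bid : ∀ i, rankBy n m i < k → p ≤ m i
  bid_le : ∀ i, k ≤ rankBy n m i → m i ≤ p
  prefBudget_pred_le : prefBudget n m B (k - 1) ≤ p * D
  le_prefBudget : p * D ≤ prefBudget n m B k
  eq_prefBudget_of_lt : ∀ i, rankBy n m i + 1 = k → p < m i → p * D = prefBudget n m B k

noncomputable def clearingClicks (n : ℕ) (D : ℝ) (m B : Fin n → ℝ) (k : ℕ) (p : ℝ)
    (i : Fin n) : ℝ :=
  if rankBy n m i + 1 < k then B i / p
  else if rankBy n m i + 1 = k then D - prefBudget n m B (k - 1) / p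
  else 0

section PriceSetting

variable {n : ℕ} {D : ℝ} {bid bud : Fin n → ℝ} {t : ℕ}

theorem psK_spec :
    (1 ≤ psK n D bid bud ∧
        nthKey n bid (psK n D bid bud) ≤ prefBudget n bid bud (psK n D bid bud) / D) ∨
      psK n D bid bud = n := by
  unfold psK
  exact Nat.find_spec
    (p := fun t => (1 ≤ t ∧ nthKey n bid t ≤ prefBudget n bid bud t / D) ∨ t = n) _

theorem psK_le : psK n D bid bud ≤ n := by
  unfold psK
  exact Nat.find_le (Or.inr rfl)

theorem one_le_psK (hn : 0 < n) : 1 ≤ psK n D bid bud := by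
  rcases psK_spec (D := D) (bid := bid) (bud := bud) with h | h
  · exact h.1
  · omega

theorem nthKey_psK_le (hD : 0 ≤ D) (hbud : ∀ j, 0 ≤ bud j) :
    nthKey n bid (psK n D bid bud) ≤ prefBudget n bid bud (psK n D bid bud) / D := by
  rcases psK_spec (D := D) (bid := bid) (bud := bud) with h | h
  · exact h.2
  · rw [h, nthKey_of_le le_rfl]
    exact div_nonneg (sum_nonneg fun j _ => hbud j) hD

theorem div_lt_nthKey_of_lt_psK (h1 : 1 ≤ t) (ht : t < psK n D bid bud) :
    prefBudget n bid bud t / D < nthKey n bid t := by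
  unfold psK at ht
  have := Nat.find_min _ ht
  push Not at this
  exact this.1 h1

theorem psPrice_eq {i : Fin n} (hi : rankBy n bid i + 1 = psK n D bid bud) :
    psPrice n D bid bud = min (prefBudget n bid bud (psK n D bid bud) / D) (bid i) := by
  rw [psPrice, nthKey_eq_of_rankBy_eq (key := bid) (i := i) (by omega)]

theorem isClearing_psK_psPrice (hn : 0 < n) (hD : 0 < D) (hbid : ∀ j, 0 < bid j)
    (hbud : ∀ j, 0 < bud j) :
    IsClearing n D bid bud (psK n D bid bud) (psPrice n D bid bud) := by
  have hk1 : 1 ≤ psK n D bid bud := one_le_psK hn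
  have hkn : psK n D bid bud ≤ n := psK_le
  set k := psK n D bid bud
  have hbud0 : ∀ j, 0 ≤ bud j := fun j => (hbud j).le
  obtain ⟨i₀, hi₀⟩ := exists_rankBy_eq (key := bid) (show k - 1 < n by omega)
  have hp : psPrice n D bid bud = min (prefBudget n bid bud k / D) (bid i₀) :=
    psPrice_eq (by omega)
  refine ⟨?_, fun i hi => ?_, fun i hi => ?_, ?_, ?_, fun i hi hlt => ?_⟩
  · rw [hp]
    exact lt_min (div_pos ((hbud i₀).trans_le (le_prefBudget hbud0 (by omega))) hD) (hbid i₀)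
  · rw [hp]
    exact (min_le_right _ _).trans (key_le_key_of_rankBy_le (key := bid) (by omega))
  · obtain ⟨i₁, hi₁⟩ := exists_rankBy_eq (key := bid) (hi.trans_lt (rankBy_lt i))
    rw [hp]
    refine le_min ?_ (key_le_key_of_rankBy_le (key := bid) (by omega))
    calc bid i ≤ bid i₁ := key_le_key_of_rankBy_le (key := bid) (by omega)
      _ = nthKey n bid k := (nthKey_eq_of_rankBy_eq hi₁).symm
      _ ≤ _ := nthKey_psK_le hD.le hbud0
  · rw [← div_le_iff₀ hD, hp]
    refine le_min (div_le_div_of_nonneg_right (prefBudget_mono hbud0 (by omega)) hD.le) ?_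
    rcases hk1.eq_or_lt with hk | hk
    · rw [← hk]
      simpa [prefBudget] using (hbid i₀).le
    · rw [← nthKey_eq_of_rankBy_eq hi₀]
      exact (div_lt_nthKey_of_lt_psK (by omega) (by omega)).le
  · rw [← le_div_iff₀ hD, hp]
    exact min_le_left _ _
  · obtain rfl : i = i₀ := rankBy_injective (key := bid) (by omega)
    rw [hp, min_lt_iff, lt_self_iff_false, or_false] at hlt
    rw [hp, min_eq_left hlt.le, div_mul_cancel₀ _ hD.ne']

theorem psClicks_eq_clearingClicks (hp : 0 < psPrice n D bid bud) :
    psClicks n D bid bud = clearingClicks n D bid bud (psK n D bid bud) (psPrice n D bid bud) := by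
  funext i
  rw [psClicks, if_neg hp.not_ge, clearingClicks, sub_div, mul_div_cancel_left₀ _ hp.ne']

end PriceSetting

section EquilibriumBids

variable {n : ℕ} {m : Fin n → ℝ} {p δ b : ℝ} {i j : Fin n}

/-- Bids just above `p`, staggered by `δ` along the ranking by `m` so that this ranking is
preserved, and capped at the true values `m`. -/
noncomputable def eqBid (m : Fin n → ℝ) (p δ : ℝ) (i : Fin n) : ℝ :=
  min (m i) (p + δ * (n - rankBy n m i))

theorem lt_add_mul_sub_rankBy (hδ : 0 < δ) (i : Fin n) : p < p + δ * (n - rankBy n m i) := by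
  have : (rankBy n m i : ℝ) < n := by exact_mod_cast rankBy_lt i
  nlinarith

theorem eqBid_le_key : eqBid m p δ i ≤ m i := min_le_left _ _

theorem eqBid_le (hδ : 0 ≤ δ) : eqBid m p δ i ≤ p + δ * n := by
  have : (0 : ℝ) ≤ rankBy n m i := Nat.cast_nonneg _
  exact (min_le_right _ _).trans (by nlinarith)

theorem le_eqBid (hδ : 0 < δ) (h : p ≤ m i) : p ≤ eqBid m p δ i :=
  le_min h (lt_add_mul_sub_rankBy hδ i).le

theorem eqBid_pos (hδ : 0 < δ) (hp : 0 ≤ p) (hm : 0 < m i) : 0 < eqBid m p δ i :=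
  lt_min hm (hp.trans_lt (lt_add_mul_sub_rankBy hδ i))

theorem key_eq_of_eqBid_eq (hδ : 0 < δ) (h : eqBid m p δ i = p) : m i = p := by
  rcases min_eq_iff.1 h with ⟨h1, _⟩ | ⟨h1, _⟩
  · exact h1
  · exact absurd h1 (lt_add_mul_sub_rankBy hδ i).ne'

theorem rankBy_eqBid (hδ : 0 < δ) : rankBy n (eqBid m p δ) = rankBy n m := by
  rw [rankBy_eq_numAbove, rankBy_eq_numAbove]
  refine numAbove_eq_of_lt_imp_lt rankKey_injective fun i j h => ?_
  have hcap : p + δ * (n - rankBy n m i) < p + δ * (n - rankBy n m j) := by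
    have : (rankBy n m j : ℝ) < rankBy n m i := by exact_mod_cast rankBy_lt_rankBy_iff.2 h
    nlinarith
  rw [rankKey_lt_rankKey_iff] at h ⊢
  rcases h with h | ⟨h, hji⟩
  · exact Or.inl (min_lt_min h hcap)
  · rcases (min_le_min h.le hcap.le).lt_or_eq with hlt | heq
    · exact Or.inl hlt
    · exact Or.inr ⟨heq, hji⟩

theorem rankKey_update_lt_of_lt {bid : Fin n → ℝ} (hji : j ≠ i) (h : b < bid j) :
    rankKey (update bid i b) i < rankKey (update bid i b) j := by
  rw [rankKey_lt_rankKey_iff, update_self, update_of_ne hji]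
  exact Or.inl h

theorem rankKey_update_eqBid_lt (hδ : 0 < δ) (hji : rankBy n m j < rankBy n m i) (hpj : p ≤ m j)
    (hbp : b ≤ p) (hbm : b ≤ m i) :
    rankKey (update (eqBid m p δ) i b) i < rankKey (update (eqBid m p δ) i b) j := by
  have hne : j ≠ i := by rintro rfl; exact lt_irrefl _ hji
  rcases (hbp.trans (le_eqBid hδ hpj)).lt_or_eq with hlt | heq
  · exact rankKey_update_lt_of_lt hne hlt
  · -- a tie at `p` forces `m i = m j = p`, and then `j` wins the tie-break as it ranks above `i`
    have hbj : eqBid m p δ j = p := le_antisymm (heq ▸ hbp) (le_eqBid hδ hpj)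
    have hmi : ¬ m i < m j := by
      rw [key_eq_of_eqBid_eq hδ hbj, ← hbj, ← heq]
      exact not_lt.2 hbm
    have hord := rankKey_lt_rankKey_iff.1 (rankBy_lt_rankBy_iff.1 hji)
    rw [rankKey_lt_rankKey_iff, update_self, update_of_ne hne]
    exact Or.inr ⟨heq, (hord.resolve_left hmi).2⟩

end EquilibriumBids

section Equilibrium

variable {n : ℕ} {D : ℝ} {m B : Fin n → ℝ} {k t : ℕ} {p δ ε x : ℝ} {i : Fin n}

theorem prefBudget_div_eqBid_le (hc : IsClearing n D m B k p) (hδ : 0 < δ)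
    (hB : ∀ j, 0 ≤ B j) (ht : t ≤ k) :
    prefBudget n m (B / eqBid m p δ) t ≤ prefBudget n m B t / p :=
  sum_div_le_div_of_le hc.pos (fun j _ => hB j) fun j hj =>
    le_eqBid hδ (hc.le_bid j (by simp only [mem_filter, mem_univ, true_and] at hj; omega))

theorem div_le_prefBudget_div_eqBid (hp : 0 ≤ p) (hδ : 0 < δ) (hm : ∀ j, 0 < m j)
    (hB : ∀ j, 0 ≤ B j) (t : ℕ) :
    prefBudget n m B t / (p + δ * n) ≤ prefBudget n m (B / eqBid m p δ) t :=
  sum_div_le_sum_div (fun j _ => hB j) fun _ _ => ⟨eqBid_pos hδ hp (hm _), eqBid_le hδ.le⟩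

theorem gfpClicks_eqBid (hD : 0 ≤ D) (hp : 0 ≤ p) (hδ : 0 < δ) (hm : ∀ j, 0 < m j)
    (hB : ∀ j, 0 ≤ B j) :
    gfpClicks n D (eqBid m p δ) B i =
      min (B i / eqBid m p δ i)
        (D - min D (prefBudget n m (B / eqBid m p δ) (rankBy n m i))) := by
  rw [gfpClicks_eq hD hB fun j => (eqBid_pos hδ hp (hm j)).le]
  simp only [prefBudget, rankBy_eqBid hδ]

theorem div_sub_div_le_of_le_prefBudget (hp : 0 < p) (hδ : 0 < δ)
    (hgap : prefBudget n m B k / p - prefBudget n m B k / (p + δ * n) ≤ ε)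
    (hx : x ≤ prefBudget n m B k) :
    x / p - x / (p + δ * n) ≤ ε :=
  (div_sub_div_le_div_sub_div hp (le_add_of_nonneg_right (by positivity)) hx).trans hgap

theorem nonneg_of_gap (hp : 0 < p) (hδ : 0 < δ) (hB : ∀ j, 0 ≤ B j)
    (hgap : prefBudget n m B k / p - prefBudget n m B k / (p + δ * n) ≤ ε) : 0 ≤ ε := by
  simpa using div_sub_div_le_of_le_prefBudget hp hδ hgap (sum_nonneg fun j _ => hB j)

theorem sub_mul_div_le_of_gap (hc : IsClearing n D m B k p) (hδ : 0 < δ)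
    (hgap : prefBudget n m B k / p - prefBudget n m B k / (p + δ * n) ≤ ε) :
    D - p * D / (p + δ * n) ≤ ε := by
  simpa [mul_div_cancel_left₀ _ hc.pos.ne'] using
    div_sub_div_le_of_le_prefBudget hc.pos hδ hgap hc.le_prefBudget

theorem abs_gfpClicks_eqBid_sub_le_of_lt (hc : IsClearing n D m B k p) (hD : 0 ≤ D)
    (hδ : 0 < δ) (hm : ∀ j, 0 < m j) (hB : ∀ j, 0 ≤ B j)
    (hgap : prefBudget n m B k / p - prefBudget n m B k / (p + δ * n) ≤ ε)
    (hi : rankBy n m i + 1 < k) :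
    |gfpClicks n D (eqBid m p δ) B i - B i / p| ≤ ε := by
  have hp := hc.pos
  have hbi : p ≤ eqBid m p δ i := le_eqBid hδ (hc.le_bid i (by omega))
  have hW := prefBudget_div_eqBid_le hc hδ hB (t := rankBy n m i) (by omega)
  -- bidder `i` is served before the supply runs out
  have hfit : prefBudget n m B (rankBy n m i) / p + B i / p ≤ D := by
    rw [← add_div, div_le_iff₀ hp, ← prefBudget_succ_rankBy]
    linarith [prefBudget_mono (key := m) hB (by omega : rankBy n m i + 1 ≤ k - 1),
      hc.prefBudget_pred_le]
  have hle : B i / eqBid m p δ i ≤ B i / p := div_le_div_of_nonneg_left (hB i) hp hbi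
  have hge : B i / (p + δ * n) ≤ B i / eqBid m p δ i :=
    div_le_div_of_nonneg_left (hB i) (hp.trans_le hbi) (eqBid_le hδ.le)
  have hgapB := div_sub_div_le_of_le_prefBudget hp hδ hgap (le_prefBudget (i := i) hB (by omega))
  have hB0 : 0 ≤ B i / p := div_nonneg (hB i) hp.le
  have hWD : prefBudget n m (B / eqBid m p δ) (rankBy n m i) ≤ D := by linarith
  rw [gfpClicks_eqBid hD hp.le hδ hm hB, min_eq_right hWD, min_eq_left (by linarith),
    abs_sub_comm, abs_of_nonneg (by linarith)]
  linarith

theorem abs_gfpClicks_eqBid_sub_le_of_eq (hc : IsClearing n D m B k p) (hD : 0 ≤ D)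
    (hδ : 0 < δ) (hm : ∀ j, 0 < m j) (hB : ∀ j, 0 ≤ B j)
    (hgap : prefBudget n m B k / p - prefBudget n m B k / (p + δ * n) ≤ ε)
    (hi : rankBy n m i + 1 = k) :
    |gfpClicks n D (eqBid m p δ) B i - (D - prefBudget n m B (k - 1) / p)| ≤ ε := by
  have hp := hc.pos
  have hr : rankBy n m i = k - 1 := by omega
  have hbi : p ≤ eqBid m p δ i := le_eqBid hδ (hc.le_bid i (by omega))
  set W := prefBudget n m (B / eqBid m p δ) (k - 1)
  have hWle : W ≤ prefBudget n m B (k - 1) / p := prefBudget_div_eqBid_le hc hδ hB (by omega)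
  have hWge : prefBudget n m B (k - 1) / (p + δ * n) ≤ W :=
    div_le_prefBudget_div_eqBid hp.le hδ hm hB (k - 1)
  have hSD : prefBudget n m B (k - 1) / p ≤ D := by
    rw [div_le_iff₀ hp]
    linarith [hc.prefBudget_pred_le]
  have hSk : prefBudget n m B k = prefBudget n m B (k - 1) + B i := by
    have h := prefBudget_succ_rankBy (key := m) (f := B) (i := i)
    rwa [hi, hr] at h
  have hfit : D - prefBudget n m B (k - 1) / p ≤ B i / p := by
    rw [sub_le_iff_le_add, ← add_div, le_div_iff₀ hp]
    linarith [hc.le_prefBudget]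
  have hge : B i / (p + δ * n) ≤ B i / eqBid m p δ i :=
    div_le_div_of_nonneg_left (hB i) (hp.trans_le hbi) (eqBid_le hδ.le)
  have hgapB := div_sub_div_le_of_le_prefBudget hp hδ hgap (le_prefBudget (i := i) hB (by omega))
  have hgapS := div_sub_div_le_of_le_prefBudget hp hδ hgap (prefBudget_mono hB (Nat.sub_le k 1))
  rw [gfpClicks_eqBid hD hp.le hδ hm hB, hr, min_eq_right (hWle.trans hSD), abs_le]
  constructor
  · have h : D - prefBudget n m B (k - 1) / p - ε ≤ min (B i / eqBid m p δ i) (D - W) :=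
      le_min (by linarith) (by linarith)
    linarith
  · linarith [min_le_right (B i / eqBid m p δ i) (D - W)]

theorem gfpClicks_eqBid_le_of_le (hc : IsClearing n D m B k p) (hD : 0 ≤ D) (hδ : 0 < δ)
    (hm : ∀ j, 0 < m j) (hB : ∀ j, 0 ≤ B j)
    (hgap : prefBudget n m B k / p - prefBudget n m B k / (p + δ * n) ≤ ε)
    (hi : k ≤ rankBy n m i) :
    gfpClicks n D (eqBid m p δ) B i ≤ ε := by
  have hp := hc.pos
  have hq : 0 < p + δ * n := by positivity
  set W := prefBudget n m (B / eqBid m p δ) (rankBy n m i)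
  have hW : p * D / (p + δ * n) ≤ W :=
    calc p * D / (p + δ * n) ≤ prefBudget n m B k / (p + δ * n) :=
          div_le_div_of_nonneg_right hc.le_prefBudget hq.le
      _ ≤ prefBudget n m (B / eqBid m p δ) k := div_le_prefBudget_div_eqBid hp.le hδ hm hB k
      _ ≤ W := prefBudget_mono (fun j => div_nonneg (hB j) (eqBid_pos hδ hp.le (hm j)).le) hi
  have hDq : p * D / (p + δ * n) ≤ D := by
    rw [div_le_iff₀ hq]
    nlinarith [mul_nonneg hδ.le (Nat.cast_nonneg n : (0 : ℝ) ≤ n)]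
  rw [gfpClicks_eqBid hD hp.le hδ hm hB]
  linarith [min_le_right (B i / eqBid m p δ i) (D - min D W), le_min hDq hW,
    sub_mul_div_le_of_gap hc hδ hgap]

theorem abs_gfpClicks_eqBid_sub_clearingClicks_le (hc : IsClearing n D m B k p) (hD : 0 ≤ D)
    (hδ : 0 < δ) (hm : ∀ j, 0 < m j) (hB : ∀ j, 0 ≤ B j)
    (hgap : prefBudget n m B k / p - prefBudget n m B k / (p + δ * n) ≤ ε) :
    |gfpClicks n D (eqBid m p δ) B i - clearingClicks n D m B k p i| ≤ ε := by
  unfold clearingClicks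
  split_ifs with h₁ h₂
  · exact abs_gfpClicks_eqBid_sub_le_of_lt hc hD hδ hm hB hgap h₁
  · exact abs_gfpClicks_eqBid_sub_le_of_eq hc hD hδ hm hB hgap h₂
  · rw [sub_zero,
      abs_of_nonneg (gfpClicks_nonneg hD hB fun j => (eqBid_pos hδ hc.pos.le (hm j)).le)]
    exact gfpClicks_eqBid_le_of_le hc hD hδ hm hB hgap (by omega)

end Equilibrium

section Deviation

variable {n : ℕ} {D : ℝ} {m B : Fin n → ℝ} {k : ℕ} {p δ ε b B' : ℝ} {i : Fin n}

theorem gfpClicks_update_eqBid_le (hD : 0 ≤ D) (hp : 0 ≤ p) (hδ : 0 < δ) (hm : ∀ j, 0 < m j)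
    (hB : ∀ j, 0 ≤ B j) (hb : 0 ≤ b) (hB' : 0 ≤ B') {T : Finset (Fin n)} (hiT : i ∉ T)
    (hT : ∀ j ∈ T,
      rankKey (update (eqBid m p δ) i b) i < rankKey (update (eqBid m p δ) i b) j) :
    gfpClicks n D (update (eqBid m p δ) i b) (update B i B') i ≤
      max (D - (∑ j ∈ T, B j) / (p + δ * n)) 0 := by
  have hne : ∀ j ∈ T, j ≠ i := fun j hj h => hiT (h ▸ hj)
  have hbud : ∀ j, 0 ≤ update B i B' j := fun j => by
    rw [update_apply]
    split_ifs
    exacts [hB', hB j]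
  have hbid : ∀ j, 0 ≤ update (eqBid m p δ) i b j := fun j => by
    rw [update_apply]
    split_ifs
    exacts [hb, (eqBid_pos hδ hp (hm j)).le]
  have h := gfpClicks_le_of_forall_rankKey_lt hD hbud hbid hT
  rw [sum_congr rfl fun j hj => by rw [update_of_ne (hne j hj), update_of_ne (hne j hj)],
    ← max_sub_sub_left, sub_self, max_comm] at h
  have hsum := sum_div_le_sum_div (s := T) (fun j _ => hB j)
    fun j _ => ⟨eqBid_pos hδ hp (hm j), eqBid_le (m := m) hδ.le⟩
  exact h.trans (max_le_max (by linarith) le_rfl)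

theorem gfpClicks_update_eqBid_le_of_lt (hc : IsClearing n D m B k p) (hD : 0 ≤ D)
    (hδ : 0 < δ) (hm : ∀ j, 0 < m j) (hB : ∀ j, 0 ≤ B j)
    (hgap : prefBudget n m B k / p - prefBudget n m B k / (p + δ * n) ≤ ε)
    (hb : 0 ≤ b) (hB' : 0 ≤ B')
    (hpay : gfpClicks n D (update (eqBid m p δ) i b) (update B i B') i * b ≤ B i)
    (hi : rankBy n m i + 1 < k) :
    gfpClicks n D (update (eqBid m p δ) i b) (update B i B') i ≤ B i / p + ε := by
  have hp := hc.pos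
  have hε := nonneg_of_gap hp hδ hB hgap
  by_cases hpb : p ≤ b
  · linarith [le_div_of_mul_le_of_le hp hpb (hB i) hpay]
  -- underbidding `p` puts `i` behind all other top-`k` bidders
  push Not at hpb
  have hiT : i ∈ ({j | rankBy n m j < k} : Finset (Fin n)) := by simp; omega
  have h := gfpClicks_update_eqBid_le hD hp.le hδ hm hB hb hB'
    (T := ({j | rankBy n m j < k} : Finset (Fin n)).erase i) (notMem_erase i _) fun j hj =>
    rankKey_update_lt_of_lt (ne_of_mem_erase hj) (hpb.trans_le (le_eqBid hδ (hc.le_bid j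
      (mem_filter.1 (mem_of_mem_erase hj)).2)))
  rw [sum_erase_eq_sub hiT] at h
  change _ ≤ max (D - (prefBudget n m B k - B i) / (p + δ * n)) 0 at h
  have hS := div_le_div_of_nonneg_right (c := p + δ * n) hc.le_prefBudget (by positivity)
  have hBq : B i / (p + δ * n) ≤ B i / p :=
    div_le_div_of_nonneg_left (hB i) hp (le_add_of_nonneg_right (by positivity))
  refine h.trans (max_le ?_ (by linarith [div_nonneg (hB i) hp.le]))
  rw [sub_div]
  linarith [sub_mul_div_le_of_gap hc hδ hgap]

theorem gfpClicks_update_eqBid_le_of_eq (hc : IsClearing n D m B k p) (hD : 0 ≤ D)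
    (hδ : 0 < δ) (hm : ∀ j, 0 < m j) (hB : ∀ j, 0 ≤ B j)
    (hgap : prefBudget n m B k / p - prefBudget n m B k / (p + δ * n) ≤ ε)
    (hb : 0 ≤ b) (hB' : 0 ≤ B') (hbm : b ≤ m i)
    (hpay : gfpClicks n D (update (eqBid m p δ) i b) (update B i B') i * b ≤ B i)
    (hi : rankBy n m i + 1 = k) :
    gfpClicks n D (update (eqBid m p δ) i b) (update B i B') i ≤
      D - prefBudget n m B (k - 1) / p + ε := by
  have hp := hc.pos
  have hε := nonneg_of_gap hp hδ hB hgap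
  by_cases hpb : p < b
  · -- a marginal bidder with value above `p` is not rationed by PS, so `B i / p` is her allocation
    have hSk : prefBudget n m B k = prefBudget n m B (k - 1) + B i := by
      have h := prefBudget_succ_rankBy (key := m) (f := B) (i := i)
      rwa [hi, show rankBy n m i = k - 1 by omega] at h
    have hpD := hc.eq_prefBudget_of_lt i hi (hpb.trans_le hbm)
    have hBi : B i / p = D - prefBudget n m B (k - 1) / p := by
      rw [eq_sub_iff_add_eq, ← add_div, add_comm, ← hSk, ← hpD,
        mul_div_cancel_left₀ _ hp.ne']
    linarith [le_div_of_mul_le_of_le hp hpb.le (hB i) hpay]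
  push Not at hpb
  have h := gfpClicks_update_eqBid_le hD hp.le hδ hm hB hb hB'
    (T := {j | rankBy n m j < k - 1}) (by simp; omega) fun j hj =>
      rankKey_update_eqBid_lt hδ (by simp at hj; omega) (hc.le_bid j (by simp at hj; omega))
        hpb hbm
  change _ ≤ max (D - prefBudget n m B (k - 1) / (p + δ * n)) 0 at h
  have hgapS := div_sub_div_le_of_le_prefBudget hp hδ hgap (prefBudget_mono hB (Nat.sub_le k 1))
  have hSD : prefBudget n m B (k - 1) / p ≤ D := by
    rw [div_le_iff₀ hp]
    linarith [hc.prefBudget_pred_le]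
  exact h.trans (max_le (by linarith) (by linarith))

theorem gfpClicks_update_eqBid_le_of_le (hc : IsClearing n D m B k p) (hD : 0 ≤ D)
    (hδ : 0 < δ) (hm : ∀ j, 0 < m j) (hB : ∀ j, 0 ≤ B j)
    (hgap : prefBudget n m B k / p - prefBudget n m B k / (p + δ * n) ≤ ε)
    (hb : 0 ≤ b) (hB' : 0 ≤ B') (hbm : b ≤ m i) (hi : k ≤ rankBy n m i) :
    gfpClicks n D (update (eqBid m p δ) i b) (update B i B') i ≤ ε := by
  have hp := hc.pos
  have hbp : b ≤ p := hbm.trans (hc.bid_le i hi)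
  have h := gfpClicks_update_eqBid_le hD hp.le hδ hm hB hb hB'
    (T := {j | rankBy n m j < k}) (by simp; omega) fun j hj =>
      rankKey_update_eqBid_lt hδ (by simp at hj; omega) (hc.le_bid j (by simpa using hj)) hbp hbm
  change _ ≤ max (D - prefBudget n m B k / (p + δ * n)) 0 at h
  have hS := div_le_div_of_nonneg_right (c := p + δ * n) hc.le_prefBudget (by positivity)
  exact h.trans (max_le (by linarith [sub_mul_div_le_of_gap hc hδ hgap])
    (nonneg_of_gap hp hδ hB hgap))

theorem gfpClicks_update_eqBid_le_clearingClicks (hc : IsClearing n D m B k p) (hD : 0 ≤ D)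
    (hδ : 0 < δ) (hm : ∀ j, 0 < m j) (hB : ∀ j, 0 ≤ B j)
    (hgap : prefBudget n m B k / p - prefBudget n m B k / (p + δ * n) ≤ ε)
    (hb : 0 ≤ b) (hB' : 0 ≤ B') (hbm : b ≤ m i)
    (hpay : gfpClicks n D (update (eqBid m p δ) i b) (update B i B') i * b ≤ B i) :
    gfpClicks n D (update (eqBid m p δ) i b) (update B i B') i ≤
      clearingClicks n D m B k p i + ε := by
  unfold clearingClicks
  split_ifs with h₁ h₂
  · exact gfpClicks_update_eqBid_le_of_lt hc hD hδ hm hB hgap hb hB' hpay h₁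
  · exact gfpClicks_update_eqBid_le_of_eq hc hD hδ hm hB hgap hb hB' hbm hpay h₂
  · rw [zero_add]
    exact gfpClicks_update_eqBid_le_of_le hc hD hδ hm hB hgap hb hB' hbm (by omega)

end Deviation

/-- Running the PS mechanism on the truthful input yields clicks
`psClicks n D m B`.  For every `ε > 0` there is a profile of declared bids
(with budgets declared truthfully) that is a pure-strategy ε-Nash equilibrium
of the GFP mechanism and in which every bidder receives within `ε` of her PS
click allocation. -/
theorem gfp_epsilon_nash_matches_ps (n : ℕ) (hn : 1 < n) (D : ℝ) (hD : 0 < D)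
    (m B : Fin n → ℝ) (hm : ∀ j, 0 < m j) (hB : ∀ j, 0 < B j)
    (ε : ℝ) (hε : 0 < ε) :
    ∃ bd : Fin n → ℝ, (∀ j, 0 ≤ bd j) ∧
      (∀ (i : Fin n) (b' B' : ℝ), 0 ≤ b' → 0 < B' →
        gfpUtil n D (m i) (B i)
            (Function.update bd i b') (Function.update B i B') i ≤
          gfpUtil n D (m i) (B i) bd B i + (ε : EReal)) ∧
      (∀ i : Fin n, |gfpClicks n D bd B i - psClicks n D m B i| ≤ ε) := by
  have hc := isClearing_psK_psPrice (by omega) hD hm hB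
  set k := psK n D m B
  set p := psPrice n D m B
  have hB0 : ∀ j, 0 ≤ B j := fun j => (hB j).le
  obtain ⟨δ, hδ, hgap⟩ := exists_pos_div_sub_div_add_mul_le hc.pos (prefBudget n m B k) n
    (half_pos hε)
  have hbd : ∀ j, 0 < eqBid m p δ j := fun j => eqBid_pos hδ hc.pos.le (hm j)
  have hclose i := abs_gfpClicks_eqBid_sub_clearingClicks_le (i := i) hc hD.le hδ hm hB0 hgap
  refine ⟨eqBid m p δ, fun j => (hbd j).le, fun i b' B' hb' hB' => ?_, fun i => ?_⟩
  · have hci := abs_le.1 (hclose i)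
    rw [gfpUtil_eq_gfpClicks (hbd i) eqBid_le_key le_rfl, ← EReal.coe_add]
    refine (gfpUtil_le_coe (x := clearingClicks n D m B k p i + ε / 2) ?_
      fun hbm hpay => ?_).trans ?_
    · linarith [gfpClicks_nonneg (i := i) hD.le hB0 fun j => (hbd j).le]
    · rw [update_self] at hbm hpay
      exact gfpClicks_update_eqBid_le_clearingClicks hc hD.le hδ hm hB0 hgap hb' hB'.le hbm hpay
    · exact_mod_cast (by linarith)
  · rw [psClicks_eq_clearingClicks hc.pos]
    exact (hclose i).trans (half_le_self hε.le)
end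

section
/- The multiple-slot, budgets-only price-setting mechanism is truthful: for every bidder i with true budget B_i > 0 and every fixed declared budgets of the other bidders, declaring B̂_i = B_i yields utility for bidder i at least as large as that of any other declared budget B̂_i > 0. -/
/-- The block price for (budget-sorted) budgets `Bs` and slot rates `Ds`:
`max_{1 ≤ ℓ ≤ |Bs|} (Σ_{i≤ℓ} B_i)/(Σ_{j≤ℓ} D_j)`. -/
noncomputable def psbPrice (Bs Ds : List ℝ) : ℝ :=
  if h : ((Finset.Icc 1 Bs.length).image
      (fun l => (Bs.take l).sum / (Ds.take l).sum)).Nonempty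
  then ((Finset.Icc 1 Bs.length).image
      (fun l => (Bs.take l).sum / (Ds.take l).sum)).max' h
  else 0

/-- The largest `ℓ` achieving the block price (defensive fallback `1`). -/
noncomputable def psbLstar (Bs Ds : List ℝ) : ℕ :=
  if h : ((Finset.Icc 1 Bs.length).filter
      (fun l => (Bs.take l).sum / (Ds.take l).sum = psbPrice Bs Ds)).Nonempty
  then ((Finset.Icc 1 Bs.length).filter
      (fun l => (Bs.take l).sum / (Ds.take l).sum = psbPrice Bs Ds)).max' h
  else 1

/-- One pass of the recursive PS mechanism on sorted budget and slot lists,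
with fuel for termination (fuel `= |Bs|` suffices since each block is
nonempty); returns the list of clicks in budget-sorted order. -/
noncomputable def psbAux : ℕ → List ℝ → List ℝ → List ℝ
  | 0, _, _ => []
  | fuel + 1, Bs, Ds =>
    if Bs = [] then []
    else if (Ds.take Bs.length).sum ≤ 0 then Bs.map (fun _ => 0)
    else
      (Bs.take (psbLstar Bs Ds)).map (fun Bv => Bv / psbPrice Bs Ds) ++
        psbAux fuel (Bs.drop (psbLstar Bs Ds)) (Ds.drop (psbLstar Bs Ds))

/-- Clicks in budget-sorted order. -/
noncomputable def psbList (Bs Ds : List ℝ) : List ℝ :=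
  psbAux Bs.length Bs Ds

/-- Clicks received by bidder `i` when the declared budgets are `bud` and the
slot rates are `D`. -/
noncomputable def psbClicks (n : ℕ) (D : Fin n → ℝ) (bud : Fin n → ℝ)
    (i : Fin n) : ℝ :=
  (psbList ((List.range n).map (atRank n bud bud))
      ((List.finRange n).map D)).getD (rankBy n bud i) 0

/-- Click-maximizing utility of bidder `i` with true budget `Btrue`: her
number of clicks provided her total payment (her declared budget, if she
receives any clicks) is at most `Btrue`, and `−∞` otherwise. -/
noncomputable def psbUtil (n : ℕ) (D : Fin n → ℝ) (Btrue : ℝ)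
    (bud : Fin n → ℝ) (i : Fin n) : EReal :=
  if psbClicks n D bud i = 0 ∨ bud i ≤ Btrue
  then (psbClicks n D bud i : EReal) else ⊥

/-!
On sorted budgets the mechanism produces clicks `c` and a nonincreasing price vector `p` with
`b = p * c`. Every set of `k` bidders receives at most the `k` top slot rates, and each block of
equal prices is tight: up to the end of a block the clicks add up to exactly the slot rates. By
Abel summation, `∑ p z ≤ ∑ p c = ∑ b` for every feasible allocation `z`.

Let `c` and `d` be the clicks for declared budgets `b₁` and `b₂` that differ only at bidder `i`,
with `b₁ i ≤ b₂ i`. Each is feasible for the other run, so adding the two optimality inequalities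
gives `∑ⱼ (b₁ⱼ dⱼ / cⱼ + b₂ⱼ cⱼ / dⱼ - b₁ⱼ - b₂ⱼ) ≤ 0`. Every term is nonnegative, and the `i`-th
is positive if `dᵢ < cᵢ`. So clicks are monotone in one's own budget: declaring less than the
true budget never gains clicks, and declaring more gives either no clicks or utility `⊥`.
-/

namespace PSB

open Finset

lemma card_filter_lt_lt_card {α β : Type*} [Fintype α] [Preorder β] [DecidableLT β] (g : α → β)
    {i j : α} (h : g j < g i) : #{k | g k < g j} < #{k | g k < g i} := by
  refine card_lt_card ⟨fun k hk => ?_, fun hsub => ?_⟩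
  · simp only [mem_filter, mem_univ, true_and] at hk ⊢
    exact hk.trans h
  · exact lt_irrefl _ (mem_filter.1 (hsub (mem_filter.2 ⟨mem_univ _, h⟩))).2

section Ranking

variable {n : ℕ} {key : Fin n → ℝ}

def rankKey (key : Fin n → ℝ) (j : Fin n) : ℝᵒᵈ ×ₗ Fin n := toLex (OrderDual.toDual (key j), j)

lemma rankBy_eq_card (key : Fin n → ℝ) (i : Fin n) :
    rankBy n key i = #{j | rankKey key j < rankKey key i} := by
  simp [rankBy, rankKey, Prod.Lex.toLex_lt_toLex]

lemma rankBy_lt_rankBy_of_rankKey_lt {i j : Fin n} (h : rankKey key j < rankKey key i) :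
    rankBy n key j < rankBy n key i := by
  simpa only [rankBy_eq_card] using card_filter_lt_lt_card _ h

lemma rankBy_lt_rankBy {i j : Fin n} (h : key i < key j) : rankBy n key j < rankBy n key i :=
  rankBy_lt_rankBy_of_rankKey_lt (Prod.Lex.toLex_lt_toLex.2 (Or.inl h))

lemma rankBy_injective (key : Fin n → ℝ) : Function.Injective (rankBy n key) := by
  intro i j h
  rcases lt_trichotomy (rankKey key i) (rankKey key j) with hlt | heq | hgt
  · exact absurd h (rankBy_lt_rankBy_of_rankKey_lt hlt).ne
  · exact congrArg Prod.snd (toLex.injective heq)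
  · exact absurd h (rankBy_lt_rankBy_of_rankKey_lt hgt).ne'

lemma rankBy_lt (key : Fin n → ℝ) (i : Fin n) : rankBy n key i < n := by
  simpa [rankBy_eq_card] using
    card_lt_univ_of_notMem (s := {j | rankKey key j < rankKey key i}) (x := i) (by simp)

noncomputable def rankEquiv (key : Fin n → ℝ) : Fin n ≃ Fin n :=
  Equiv.ofBijective (fun i => ⟨rankBy n key i, rankBy_lt key i⟩)
    (Finite.injective_iff_bijective.1 fun _ _ h => rankBy_injective key (congrArg Fin.val h))

lemma rankBy_rankEquiv_symm (key : Fin n → ℝ) (k : Fin n) :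
    rankBy n key ((rankEquiv key).symm k) = k :=
  congrArg Fin.val ((rankEquiv key).apply_symm_apply k)

lemma atRank_rankBy (key f : Fin n → ℝ) (i : Fin n) : atRank n key f (rankBy n key i) = f i := by
  have h : ({j | rankBy n key j = rankBy n key i} : Finset (Fin n)) = {i} := by
    ext j
    simpa using (rankBy_injective key).eq_iff
  simp [atRank, h]

lemma atRank_eq (key f : Fin n → ℝ) (k : Fin n) :
    atRank n key f k = f ((rankEquiv key).symm k) := by
  rw [← atRank_rankBy key f, rankBy_rankEquiv_symm]

lemma atRank_le_atRank (key : Fin n → ℝ) {k k' : ℕ} (hkk' : k ≤ k') (hk' : k' < n) :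
    atRank n key key k' ≤ atRank n key key k := by
  rw [atRank_eq key key ⟨k, by omega⟩, atRank_eq key key ⟨k', hk'⟩]
  refine le_of_not_gt fun h => ?_
  have := rankBy_lt_rankBy h
  simp only [rankBy_rankEquiv_symm] at this
  omega

lemma sum_range_atRank (key f : Fin n → ℝ) (g : ℕ → ℝ → ℝ) {m : ℕ} (hm : m ≤ n) :
    ∑ k ∈ range m, g k (atRank n key f k) =
      ∑ j with rankBy n key j < m, g (rankBy n key j) (f j) := by
  symm
  refine sum_bij' (fun j _ => rankBy n key j)
    (fun k hk => (rankEquiv key).symm ⟨k, (mem_range.1 hk).trans_le hm⟩) ?_ ?_ ?_ ?_ ?_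
  · intro j hj
    simpa using hj
  · intro k hk
    simpa [rankBy_rankEquiv_symm] using hk
  · intro j _
    exact (rankEquiv key).symm_apply_apply j
  · intro k _
    exact rankBy_rankEquiv_symm key _
  · intro j _
    rw [atRank_rankBy]

end Ranking

section Lists

lemma sum_take_succ_eq (l : List ℝ) (k : ℕ) :
    (l.take (k + 1)).sum = (l.take k).sum + l.getD k 0 := by
  rcases lt_or_ge k l.length with h | h
  · rw [List.sum_take_succ _ _ h, List.getD_eq_getElem _ _ h]
  · rw [List.take_of_length_le h, List.take_of_length_le (by omega), List.getD_eq_default _ _ h,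
      add_zero]

lemma sum_take_eq_sum_range (l : List ℝ) (k : ℕ) : (l.take k).sum = ∑ j ∈ range k, l.getD j 0 := by
  induction k with
  | zero => simp
  | succ k ih => rw [sum_take_succ_eq, ih, sum_range_succ]

lemma sum_map_div (l : List ℝ) (P : ℝ) : (l.map (· / P)).sum = l.sum / P := by
  simp [div_eq_mul_inv, List.sum_map_mul_right]

lemma getD_drop (l : List ℝ) (m k : ℕ) : (l.drop m).getD k 0 = l.getD (m + k) 0 := by
  simp [List.getD_eq_getElem?_getD]

variable {l : List ℝ}

lemma getD_nonneg (h0 : ∀ x ∈ l, 0 ≤ x) (k : ℕ) : 0 ≤ l.getD k 0 := by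
  rcases lt_or_ge k l.length with h | h
  · exact List.getD_eq_getElem _ _ h ▸ h0 _ (List.getElem_mem h)
  · exact (List.getD_eq_default _ _ h).symm.le

lemma getD_antitone (hl : l.Pairwise (· ≥ ·)) (h0 : ∀ x ∈ l, 0 ≤ x) :
    Antitone (l.getD · 0) := by
  intro a b hab
  rcases lt_or_ge b l.length with hb | hb
  · rcases hab.eq_or_lt with rfl | hlt
    · exact le_rfl
    · simp only [List.getD_eq_getElem _ _ hb, List.getD_eq_getElem _ _ (hlt.trans hb)]
      exact List.pairwise_iff_getElem.1 hl a b _ hb hlt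
  · exact (List.getD_eq_default _ _ hb).trans_le (getD_nonneg h0 a)

lemma sum_le_sum_range_card (hl : l.Pairwise (· ≥ ·)) (h0 : ∀ x ∈ l, 0 ≤ x) (T : Finset ℕ) :
    ∑ k ∈ T, l.getD k 0 ≤ ∑ j ∈ range #T, l.getD j 0 := by
  induction T using Finset.induction_on_max with
  | empty => simp
  | insert a T hlt ih =>
    have haT : a ∉ T := fun h => lt_irrefl a (hlt a h)
    have hcard : #T ≤ a := by simpa using card_le_card (fun x hx => mem_range.2 (hlt x hx))
    rw [sum_insert haT, card_insert_of_notMem haT, sum_range_succ, add_comm]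
    exact add_le_add ih (getD_antitone hl h0 hcard)

lemma sum_take_drop_le (hl : l.Pairwise (· ≥ ·)) (h0 : ∀ x ∈ l, 0 ≤ x) {a b : ℕ} (hab : a ≤ b)
    (m : ℕ) : ((l.drop b).take m).sum ≤ ((l.drop a).take m).sum := by
  simp only [sum_take_eq_sum_range, getD_drop]
  exact sum_le_sum fun j _ => getD_antitone hl h0 (by omega)

end Lists

structure ValidInput (Bs Ds : List ℝ) : Prop where
  length_eq : Bs.length = Ds.length
  budget_pos : ∀ b ∈ Bs, 0 < b
  budget_sorted : Bs.Pairwise (· ≥ ·)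
  rate_sorted : Ds.Pairwise (· ≥ ·)
  rate_nonneg : ∀ d ∈ Ds, 0 ≤ d
  rate_pos : ∀ k, k + 1 < Ds.length → 0 < Ds.getD k 0
  head_pos : Ds ≠ [] → 0 < Ds.getD 0 0

section Price

variable {Bs Ds : List ℝ}

lemma div_le_psbPrice {k : ℕ} (hk₁ : 1 ≤ k) (hk : k ≤ Bs.length) :
    (Bs.take k).sum / (Ds.take k).sum ≤ psbPrice Bs Ds := by
  have hmem : (Bs.take k).sum / (Ds.take k).sum ∈ (Icc 1 Bs.length).image
      (fun l => (Bs.take l).sum / (Ds.take l).sum) := mem_image_of_mem _ (mem_Icc.2 ⟨hk₁, hk⟩)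
  rw [psbPrice, dif_pos ⟨_, hmem⟩]
  exact le_max' _ _ hmem

lemma psbLstar_spec (hne : Bs ≠ []) :
    psbLstar Bs Ds ∈ Icc 1 Bs.length ∧
      (Bs.take (psbLstar Bs Ds)).sum / (Ds.take (psbLstar Bs Ds)).sum = psbPrice Bs Ds := by
  have hne' : ((Icc 1 Bs.length).image (fun l => (Bs.take l).sum / (Ds.take l).sum)).Nonempty :=
    ⟨_, mem_image_of_mem _ (mem_Icc.2 ⟨le_rfl, List.length_pos_iff.2 hne⟩)⟩
  obtain ⟨l, hl, hlp⟩ := mem_image.1 (max'_mem _ hne')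
  have hfil : ((Icc 1 Bs.length).filter
      (fun l => (Bs.take l).sum / (Ds.take l).sum = psbPrice Bs Ds)).Nonempty :=
    ⟨l, mem_filter.2 ⟨hl, by rw [psbPrice, dif_pos hne', hlp]⟩⟩
  rw [psbLstar, dif_pos hfil]
  exact mem_filter.1 (max'_mem _ hfil)

variable (h : ValidInput Bs Ds)
include h

lemma ValidInput.sum_take_rate_pos {k : ℕ} (hk₁ : 1 ≤ k) (hk : k ≤ Ds.length) :
    0 < (Ds.take k).sum := by
  rw [sum_take_eq_sum_range]
  refine (h.head_pos ?_).trans_le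
    (single_le_sum (fun j _ => getD_nonneg h.rate_nonneg j) (mem_range.2 hk₁))
  rintro rfl
  simp at hk
  omega

lemma sum_take_le_psbPrice_mul {k : ℕ} (hk : k ≤ Bs.length) :
    (Bs.take k).sum ≤ psbPrice Bs Ds * (Ds.take k).sum := by
  rcases Nat.eq_zero_or_pos k with rfl | hk₁
  · simp
  have hX := h.sum_take_rate_pos hk₁ (h.length_eq ▸ hk)
  exact (div_le_iff₀ hX).1 (div_le_psbPrice hk₁ hk)

lemma sum_take_psbLstar (hne : Bs ≠ []) :
    (Bs.take (psbLstar Bs Ds)).sum = psbPrice Bs Ds * (Ds.take (psbLstar Bs Ds)).sum := by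
  obtain ⟨hL, hdiv⟩ := psbLstar_spec (Ds := Ds) hne
  have hX := h.sum_take_rate_pos (mem_Icc.1 hL).1 (h.length_eq ▸ (mem_Icc.1 hL).2)
  rw [← hdiv, div_mul_cancel₀ _ hX.ne']

lemma psbPrice_pos (hne : Bs ≠ []) : 0 < psbPrice Bs Ds := by
  have hlen : 1 ≤ Bs.length := List.length_pos_iff.2 hne
  have hY : 0 < (Bs.take 1).sum := by
    rw [sum_take_eq_sum_range, sum_range_one, List.getD_eq_getElem _ _ hlen]
    exact h.budget_pos _ (List.getElem_mem _)
  exact pos_of_mul_pos_left (hY.trans_le (sum_take_le_psbPrice_mul h hlen))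
    (h.sum_take_rate_pos le_rfl (h.length_eq ▸ hlen)).le

lemma getD_psbLstar_pos (hne : Bs ≠ []) (hlt : psbLstar Bs Ds < Bs.length) :
    0 < Ds.getD (psbLstar Bs Ds) 0 := by
  refine (getD_nonneg h.rate_nonneg _).lt_of_ne fun hz => ?_
  -- if the next rate were zero, adding the next bidder to the block would raise its ratio
  have hle := sum_take_le_psbPrice_mul h (Nat.succ_le_of_lt hlt)
  rw [sum_take_succ_eq, sum_take_succ_eq Ds, ← hz, add_zero, ← sum_take_psbLstar h hne] at hle
  have hb := h.budget_pos _ (List.getElem_mem hlt)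
  rw [← List.getD_eq_getElem _ 0] at hb
  linarith

lemma ValidInput.drop (hne : Bs ≠ []) :
    ValidInput (Bs.drop (psbLstar Bs Ds)) (Ds.drop (psbLstar Bs Ds)) where
  length_eq := by simp [h.length_eq]
  budget_pos b hb := h.budget_pos b (List.mem_of_mem_drop hb)
  budget_sorted := h.budget_sorted.sublist (List.drop_sublist _ _)
  rate_sorted := h.rate_sorted.sublist (List.drop_sublist _ _)
  rate_nonneg d hd := h.rate_nonneg d (List.mem_of_mem_drop hd)
  rate_pos k hk := by
    rw [getD_drop]
    exact h.rate_pos _ (by simp at hk; omega)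
  head_pos hnil := by
    rw [getD_drop, add_zero]
    refine getD_psbLstar_pos h hne ?_
    simpa [h.length_eq] using hnil

lemma psbPrice_drop_le (hne : Bs ≠ []) (hne' : Bs.drop (psbLstar Bs Ds) ≠ []) :
    psbPrice (Bs.drop (psbLstar Bs Ds)) (Ds.drop (psbLstar Bs Ds)) ≤ psbPrice Bs Ds := by
  set L := psbLstar Bs Ds
  set L' := psbLstar (Bs.drop L) (Ds.drop L)
  have h' := h.drop hne
  have hL' := mem_Icc.1 (psbLstar_spec (Ds := Ds.drop L) hne').1
  have hX' := h'.sum_take_rate_pos hL'.1 (h'.length_eq ▸ hL'.2)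
  have hle := sum_take_le_psbPrice_mul h (k := L + L') (by simp at hL'; omega)
  rw [List.take_add, List.take_add, List.sum_append, List.sum_append, sum_take_psbLstar h hne,
    sum_take_psbLstar h' hne', mul_add] at hle
  exact le_of_mul_le_mul_right (by linarith) hX'

end Price

noncomputable def psbPriceAux : ℕ → List ℝ → List ℝ → List ℝ
  | 0, _, _ => []
  | fuel + 1, Bs, Ds =>
    if Bs = [] then []
    else if (Ds.take Bs.length).sum ≤ 0 then Bs.map (fun _ => 0)
    else List.replicate (psbLstar Bs Ds) (psbPrice Bs Ds) ++
      psbPriceAux fuel (Bs.drop (psbLstar Bs Ds)) (Ds.drop (psbLstar Bs Ds))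

structure Outcome (Bs Ds cs ps : List ℝ) : Prop where
  length_clicks : cs.length = Bs.length
  length_prices : ps.length = Bs.length
  price_pos : ∀ q ∈ ps, 0 < q
  price_le : ∀ q ∈ ps, q ≤ psbPrice Bs Ds
  price_sorted : ps.Pairwise (· ≥ ·)
  clicks_pos : ∀ c ∈ cs, 0 < c
  budget_eq : ∀ k < Bs.length, Bs.getD k 0 = ps.getD k 0 * cs.getD k 0
  sum_take_eq : ∀ k < Bs.length, (k + 1 = Bs.length ∨ ps.getD (k + 1) 0 < ps.getD k 0) →
    (cs.take (k + 1)).sum = (Ds.take (k + 1)).sum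
  feasible : ∀ T : Finset ℕ, ∑ k ∈ T, cs.getD k 0 ≤ (Ds.take #T).sum

lemma Outcome.nil {Ds : List ℝ} (hDs : ∀ d ∈ Ds, 0 ≤ d) : Outcome [] Ds [] [] where
  length_clicks := rfl
  length_prices := rfl
  price_pos := by simp
  price_le := by simp
  price_sorted := List.Pairwise.nil
  clicks_pos := by simp
  budget_eq := by simp
  sum_take_eq := by simp
  feasible T := by
    simpa using List.sum_nonneg fun d hd => hDs d (List.mem_of_mem_take hd)

section Append

variable {Bs Ds cs ps : List ℝ} {L : ℕ} {P : ℝ}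

lemma getD_map_div_take {k : ℕ} (hk : k < L) :
    ((Bs.take L).map (· / P)).getD k 0 = Bs.getD k 0 / P := by
  simpa [List.getD_eq_getElem?_getD, hk] using List.getD_map (Bs.take L) 0 (n := k) (· / P)

lemma feasible_append (h : ValidInput Bs Ds) (hP : 0 < P) (hL : L ≤ Bs.length)
    (hprice : ∀ k ≤ L, (Bs.take k).sum ≤ P * (Ds.take k).sum)
    (hcs : ∀ T : Finset ℕ, ∑ k ∈ T, cs.getD k 0 ≤ ((Ds.drop L).take #T).sum) (T : Finset ℕ) :
    ∑ k ∈ T, ((Bs.take L).map (· / P) ++ cs).getD k 0 ≤ (Ds.take #T).sum := by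
  have hleft : ((Bs.take L).map (· / P)).length = L := by simp; omega
  set T₁ := T.filter (· < L)
  set T₂ := T.filter (¬ · < L)
  have hT₁ : #T₁ ≤ L := by
    simpa using card_le_card (fun k hk => mem_range.2 (mem_filter.1 hk).2 : T₁ ⊆ range L)
  have part₁ : ∑ k ∈ T₁, ((Bs.take L).map (· / P) ++ cs).getD k 0 ≤ (Ds.take #T₁).sum := by
    have he : ∀ k ∈ T₁, ((Bs.take L).map (· / P) ++ cs).getD k 0 = Bs.getD k 0 / P := by
      intro k hk
      have hkL := (mem_filter.1 hk).2
      rw [List.getD_append _ _ _ _ (by rw [hleft]; exact hkL), getD_map_div_take hkL]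
    rw [sum_congr rfl he, ← sum_div, div_le_iff₀ hP, mul_comm]
    calc ∑ k ∈ T₁, Bs.getD k 0
        ≤ ∑ j ∈ range #T₁, Bs.getD j 0 :=
          sum_le_sum_range_card h.budget_sorted (fun b hb => (h.budget_pos b hb).le) T₁
      _ = (Bs.take #T₁).sum := (sum_take_eq_sum_range _ _).symm
      _ ≤ P * (Ds.take #T₁).sum := hprice _ hT₁
  have part₂ : ∑ k ∈ T₂, ((Bs.take L).map (· / P) ++ cs).getD k 0 ≤
      ((Ds.drop #T₁).take #T₂).sum := by
    have hinj : Set.InjOn (· - L) T₂ := fun a ha b hb hab => by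
      have := (mem_filter.1 (mem_coe.1 ha)).2
      have := (mem_filter.1 (mem_coe.1 hb)).2
      simp only at hab
      omega
    have he : ∀ k ∈ T₂, ((Bs.take L).map (· / P) ++ cs).getD k 0 = cs.getD (k - L) 0 := by
      intro k hk
      rw [List.getD_append_right _ _ _ _ (by rw [hleft]; exact not_lt.1 (mem_filter.1 hk).2), hleft]
    rw [sum_congr rfl he, ← sum_image (g := (· - L)) (f := (cs.getD · 0)) hinj]
    calc _ ≤ ((Ds.drop L).take #T₂).sum := card_image_of_injOn hinj ▸ hcs _
      _ ≤ ((Ds.drop #T₁).take #T₂).sum := sum_take_drop_le h.rate_sorted h.rate_nonneg hT₁ _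
  rw [← sum_filter_add_sum_filter_not T (· < L), ← card_filter_add_card_filter_not (· < L),
    List.take_add, List.sum_append]
  exact add_le_add part₁ part₂

lemma budget_eq_append (hP : P ≠ 0) (hL : L ≤ Bs.length)
    (hps : ∀ k < Bs.length - L, (Bs.drop L).getD k 0 = ps.getD k 0 * cs.getD k 0)
    {k : ℕ} (hk : k < Bs.length) :
    Bs.getD k 0 =
      (List.replicate L P ++ ps).getD k 0 * ((Bs.take L).map (· / P) ++ cs).getD k 0 := by
  have hleft : ((Bs.take L).map (· / P)).length = L := by simp; omega
  rcases lt_or_ge k L with hkL | hkL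
  · rw [List.getD_append _ _ _ _ (by simpa), List.getD_replicate _ hkL,
      List.getD_append _ _ _ _ (by rwa [hleft]), getD_map_div_take hkL, mul_div_cancel₀ _ hP]
  · rw [List.getD_append_right _ _ _ _ (by simpa),
      List.getD_append_right _ _ _ _ (by rwa [hleft]), hleft, List.length_replicate,
      ← hps (k - L) (by omega), getD_drop, Nat.add_sub_cancel' hkL]

lemma sum_take_append_eq {Ds left cs ps : List ℝ} {P : ℝ} {L N : ℕ} (hL : left.length = L)
    (hLN : L ≤ N) (hleft : left.sum = (Ds.take L).sum)
    (hcs : ∀ k < N - L, (k + 1 = N - L ∨ ps.getD (k + 1) 0 < ps.getD k 0) →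
      (cs.take (k + 1)).sum = ((Ds.drop L).take (k + 1)).sum)
    {k : ℕ} (hk : k < N) (hdrop : k + 1 = N ∨
      (List.replicate L P ++ ps).getD (k + 1) 0 < (List.replicate L P ++ ps).getD k 0) :
    ((left ++ cs).take (k + 1)).sum = (Ds.take (k + 1)).sum := by
  rcases lt_trichotomy (k + 1) L with hkL | hkL | hkL
  · rcases hdrop with hlast | hlt
    · omega
    · rw [List.getD_append _ _ _ _ (by simpa), List.getD_append _ _ _ _ (by simp; omega),
        List.getD_replicate _ hkL, List.getD_replicate _ (by omega)] at hlt
      exact (lt_irrefl _ hlt).elim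
  · rw [hkL, ← hL, List.take_left, hleft, hL]
  · rw [List.take_append, List.take_of_length_le (by omega), List.sum_append, hleft, hL,
      show k + 1 = L + (k - L + 1) by omega, List.take_add, List.sum_append,
      Nat.add_sub_cancel_left, hcs (k - L) (by omega)]
    rw [List.getD_append_right _ _ _ _ (by simp; omega),
      List.getD_append_right _ _ _ _ (by simp; omega), List.length_replicate,
      show k + 1 - L = k - L + 1 by omega] at hdrop
    exact hdrop.imp (by omega) id

lemma Outcome.append (h : ValidInput Bs Ds) (hne : Bs ≠ [])
    (ho : Outcome (Bs.drop (psbLstar Bs Ds)) (Ds.drop (psbLstar Bs Ds)) cs ps) :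
    Outcome Bs Ds ((Bs.take (psbLstar Bs Ds)).map (· / psbPrice Bs Ds) ++ cs)
      (List.replicate (psbLstar Bs Ds) (psbPrice Bs Ds) ++ ps) := by
  set L := psbLstar Bs Ds
  set P := psbPrice Bs Ds
  have hL := mem_Icc.1 (psbLstar_spec (Ds := Ds) hne).1
  have hP : 0 < P := psbPrice_pos h hne
  have hleft : ((Bs.take L).map (· / P)).length = L := by simp; omega
  have hlenB : (Bs.drop L).length = Bs.length - L := List.length_drop
  have hps_le : ∀ q ∈ ps, q ≤ P := fun q hq =>
    have hne' : Bs.drop L ≠ [] := List.ne_nil_of_length_pos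
      (ho.length_prices ▸ List.length_pos_of_mem hq)
    (ho.price_le q hq).trans (psbPrice_drop_le h hne hne')
  have hblock_sum : ((Bs.take L).map (· / P)).sum = (Ds.take L).sum := by
    rw [sum_map_div, sum_take_psbLstar h hne, mul_div_cancel_left₀ _ hP.ne']
  refine ⟨?_, ?_, ?_, ?_, ?_, ?_, ?_, ?_, ?_⟩
  · simp [ho.length_clicks, hlenB]; omega
  · simp [ho.length_prices, hlenB]; omega
  · simp only [List.mem_append, List.mem_replicate]
    rintro q (⟨-, rfl⟩ | hq)
    exacts [hP, ho.price_pos q hq]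
  · simp only [List.mem_append, List.mem_replicate]
    rintro q (⟨-, rfl⟩ | hq)
    exacts [le_rfl, hps_le q hq]
  · refine List.pairwise_append.2 ⟨List.pairwise_replicate.2 (Or.inr le_rfl), ho.price_sorted, ?_⟩
    intro a ha b hb
    rw [List.eq_of_mem_replicate ha]
    exact hps_le b hb
  · simp only [List.mem_append, List.mem_map]
    rintro c (⟨b, hb, rfl⟩ | hc)
    exacts [div_pos (h.budget_pos b (List.mem_of_mem_take hb)) hP, ho.clicks_pos c hc]
  · exact fun k => budget_eq_append hP.ne' hL.2 fun k' hk' => ho.budget_eq k' (by omega)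
  · refine fun k hk => sum_take_append_eq hleft hL.2 hblock_sum (fun k' hk' hdrop => ?_) hk
    exact ho.sum_take_eq k' (by omega) (by rwa [hlenB])
  · exact feasible_append h hP hL.2 (fun k hk => sum_take_le_psbPrice_mul h (hk.trans hL.2))
      ho.feasible

end Append

lemma outcome_psbAux (fuel : ℕ) : ∀ Bs Ds : List ℝ, Bs.length ≤ fuel → ValidInput Bs Ds →
    Outcome Bs Ds (psbAux fuel Bs Ds) (psbPriceAux fuel Bs Ds) := by
  induction fuel with
  | zero =>
    intro Bs Ds hlen h
    obtain rfl := List.length_eq_zero_iff.1 (Nat.le_zero.1 hlen)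
    exact Outcome.nil h.rate_nonneg
  | succ fuel ih =>
    intro Bs Ds hlen h
    rcases eq_or_ne Bs [] with rfl | hne
    · simpa [psbAux, psbPriceAux] using Outcome.nil h.rate_nonneg
    have hlen₁ : 1 ≤ Bs.length := List.length_pos_iff.2 hne
    have hX := h.sum_take_rate_pos hlen₁ h.length_eq.le
    have hL := mem_Icc.1 (psbLstar_spec (Ds := Ds) hne).1
    rw [psbAux, psbPriceAux, if_neg hne, if_neg hX.not_ge, if_neg hne, if_neg hX.not_ge]
    exact Outcome.append h hne (ih _ _ (by simp; omega) (h.drop hne))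

lemma exchange_term_nonneg {b c d : ℝ} (hb : 0 ≤ b) (hc : 0 < c) (hd : 0 < d) :
    0 ≤ b / c * d + b / d * c - b - b := by
  have h : b / c * d + b / d * c - b - b = b * (c - d) ^ 2 / (c * d) := by
    field_simp
    ring
  rw [h]
  positivity

lemma exchange_term_pos {b b' c d : ℝ} (hb : 0 < b) (hbb' : b ≤ b') (hd : 0 < d) (hdc : d < c) :
    0 < b / c * d + b' / d * c - b - b' := by
  have hc : 0 < c := hd.trans hdc
  have h : b / c * d + b' / d * c - b - b' = (c - d) * (b' * c - b * d) / (c * d) := by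
    field_simp
    ring
  rw [h]
  exact div_pos (mul_pos (by linarith) (by nlinarith)) (mul_pos hc hd)

lemma sum_mul_le_sum_mul_of_prefix_sums {n : ℕ} (p z c X : ℕ → ℝ)
    (hp : ∀ k, k + 1 < n → p (k + 1) ≤ p k) (hpn : 0 ≤ p (n - 1))
    (hz : ∀ m ≤ n, ∑ k ∈ range m, z k ≤ X m)
    (hc : ∀ k < n, (k + 1 = n ∨ p (k + 1) < p k) → ∑ j ∈ range (k + 1), c j = X (k + 1)) :
    ∑ k ∈ range n, p k * z k ≤ ∑ k ∈ range n, p k * c k := by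
  rcases Nat.eq_zero_or_pos n with rfl | hn
  · simp
  have by_parts := fun f : ℕ → ℝ => sum_range_by_parts p f n
  simp only [smul_eq_mul] at by_parts
  rw [by_parts, by_parts]
  have hcn := hc (n - 1) (by omega) (Or.inl (by omega))
  rw [Nat.sub_add_cancel hn] at hcn
  -- each increment `p (k+1) - p k` is either zero or negative at a block end, where `c` is tight
  have hsteps : ∀ k ∈ range (n - 1), (p (k + 1) - p k) * ∑ j ∈ range (k + 1), c j ≤
      (p (k + 1) - p k) * ∑ j ∈ range (k + 1), z j := by
    intro k hk
    have hk := mem_range.1 hk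
    rcases (hp k (by omega)).eq_or_lt with heq | hlt
    · simp [heq]
    · rw [hc k (by omega) (Or.inr hlt)]
      exact mul_le_mul_of_nonpos_left (hz _ (by omega)) (by linarith)
  have hlast := mul_le_mul_of_nonneg_left (hz n le_rfl) hpn
  rw [← hcn] at hlast
  linarith [sum_le_sum hsteps]

section Bidders

variable {n : ℕ} {D : Fin n → ℝ}

noncomputable def sortedBudgets (b : Fin n → ℝ) : List ℝ := (List.range n).map (atRank n b b)

def slotRates (D : Fin n → ℝ) : List ℝ := (List.finRange n).map D

lemma psbClicks_eq (b : Fin n → ℝ) (j : Fin n) :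
    psbClicks n D b j = (psbList (sortedBudgets b) (slotRates D)).getD (rankBy n b j) 0 := rfl

lemma length_sortedBudgets (b : Fin n → ℝ) : (sortedBudgets b).length = n := by
  simp [sortedBudgets]

lemma getD_sortedBudgets (b : Fin n → ℝ) (j : Fin n) :
    (sortedBudgets b).getD (rankBy n b j) 0 = b j := by
  simp [sortedBudgets, List.getD_eq_getElem?_getD, rankBy_lt, atRank_rankBy]

lemma getD_slotRates {k : ℕ} (hk : k < n) : (slotRates D).getD k 0 = D ⟨k, hk⟩ := by
  simp [slotRates, List.getD_eq_getElem?_getD, hk]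

lemma sum_range_atRank_univ (key f : Fin n → ℝ) (g : ℕ → ℝ → ℝ) :
    ∑ k ∈ range n, g k (atRank n key f k) = ∑ j, g (rankBy n key j) (f j) := by
  rw [sum_range_atRank key f g le_rfl, filter_true_of_mem fun j _ => rankBy_lt key j]

lemma card_rankBy_lt (key : Fin n → ℝ) {m : ℕ} (hm : m ≤ n) : #{j | rankBy n key j < m} = m := by
  have h := sum_range_atRank key (fun _ => 1) (fun _ x => x) hm
  rw [sum_congr rfl fun k hk => atRank_eq key (fun _ => 1) ⟨k, (mem_range.1 hk).trans_le hm⟩] at h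
  simpa using h.symm

variable (hD : StrictAnti D) (hDnn : ∀ j, 0 ≤ D j) (hpos : ∃ j, 0 < D j)
include hD hDnn hpos

lemma validInput_run {b : Fin n → ℝ} (hb : ∀ j, 0 < b j) :
    ValidInput (sortedBudgets b) (slotRates D) where
  length_eq := by simp [sortedBudgets, slotRates]
  budget_pos x hx := by
    obtain ⟨k, hk, rfl⟩ := List.mem_map.1 hx
    rw [atRank_eq b b ⟨k, List.mem_range.1 hk⟩]
    exact hb _
  budget_sorted := List.pairwise_map.2 <| List.pairwise_lt_range.imp_of_mem
    fun _ hb hab => atRank_le_atRank b hab.le (List.mem_range.1 hb)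
  rate_sorted := List.pairwise_map.2 <| (List.pairwise_lt_finRange n).imp fun hab => (hD hab).le
  rate_nonneg d hd := by
    obtain ⟨j, -, rfl⟩ := List.mem_map.1 hd
    exact hDnn j
  rate_pos k hk := by
    simp only [slotRates, List.length_map, List.length_finRange] at hk
    rw [getD_slotRates (by omega)]
    exact (hDnn ⟨n - 1, by omega⟩).trans_lt (hD (Fin.mk_lt_mk.2 (by omega)))
  head_pos hne := by
    obtain ⟨j, hj⟩ := hpos
    rw [getD_slotRates j.pos]
    exact hj.trans_le (hD.antitone (show (⟨0, j.pos⟩ : Fin n) ≤ j from Nat.zero_le _))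

lemma outcome_run {b : Fin n → ℝ} (hb : ∀ j, 0 < b j) :
    Outcome (sortedBudgets b) (slotRates D) (psbList (sortedBudgets b) (slotRates D))
      (psbPriceAux (sortedBudgets b).length (sortedBudgets b) (slotRates D)) :=
  outcome_psbAux _ _ _ le_rfl (validInput_run hD hDnn hpos hb)

section Run

variable {b : Fin n → ℝ} (hb : ∀ j, 0 < b j)
include hb

lemma psbClicks_pos (j : Fin n) : 0 < psbClicks n D b j := by
  have ho := outcome_run hD hDnn hpos hb
  have hj : rankBy n b j < (psbList (sortedBudgets b) (slotRates D)).length := by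
    rw [ho.length_clicks, length_sortedBudgets]
    exact rankBy_lt b j
  rw [psbClicks_eq, List.getD_eq_getElem _ _ hj]
  exact ho.clicks_pos _ (List.getElem_mem hj)

lemma sum_psbClicks_le (S : Finset (Fin n)) :
    ∑ j ∈ S, psbClicks n D b j ≤ ((slotRates D).take #S).sum := by
  have hinj : Set.InjOn (rankBy n b) S := (rankBy_injective b).injOn
  simpa only [psbClicks_eq, sum_image hinj, card_image_of_injOn hinj] using
    (outcome_run hD hDnn hpos hb).feasible (S.image (rankBy n b))

lemma sum_div_psbClicks_mul_le (z : Fin n → ℝ)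
    (hz : ∀ S : Finset (Fin n), ∑ j ∈ S, z j ≤ ((slotRates D).take #S).sum) :
    ∑ j, b j / psbClicks n D b j * z j ≤ ∑ j, b j := by
  have ho := outcome_run hD hDnn hpos hb
  set cs := psbList (sortedBudgets b) (slotRates D)
  set ps := psbPriceAux (sortedBudgets b).length (sortedBudgets b) (slotRates D)
  have hlen : (sortedBudgets b).length = n := length_sortedBudgets b
  have hbudget : ∀ j, b j = ps.getD (rankBy n b j) 0 * psbClicks n D b j := fun j => by
    rw [← getD_sortedBudgets b j, ho.budget_eq _ (by rw [hlen]; exact rankBy_lt b j)]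
    rfl
  have hprice : ∀ j, b j / psbClicks n D b j = ps.getD (rankBy n b j) 0 := fun j => by
    rw [hbudget j, mul_div_cancel_right₀ _ (psbClicks_pos hD hDnn hpos hb j).ne']
  have hps_nonneg : ∀ q ∈ ps, 0 ≤ q := fun q hq => (ho.price_pos q hq).le
  have hcs : ∀ k < n, atRank n b (psbClicks n D b) k = cs.getD k 0 := fun k hk => by
    rw [atRank_eq b _ ⟨k, hk⟩, psbClicks_eq, rankBy_rankEquiv_symm]
  calc ∑ j, b j / psbClicks n D b j * z j
      = ∑ k ∈ range n, ps.getD k 0 * atRank n b z k := by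
        simp only [hprice, sum_range_atRank_univ b z (fun k x => ps.getD k 0 * x)]
    _ ≤ ∑ k ∈ range n, ps.getD k 0 * cs.getD k 0 := by
        refine sum_mul_le_sum_mul_of_prefix_sums _ _ _ (fun m => ((slotRates D).take m).sum)
          (fun k _ => getD_antitone ho.price_sorted hps_nonneg k.le_succ)
          (getD_nonneg hps_nonneg _) (fun m hm => ?_) (fun k hk hdrop => ?_)
        · rw [sum_range_atRank b z (fun _ x => x) hm]
          simpa only [card_rankBy_lt b hm] using hz {j | rankBy n b j < m}
        · rw [← sum_take_eq_sum_range]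
          exact ho.sum_take_eq k (by rwa [hlen]) (by rwa [hlen])
    _ = ∑ j, ps.getD (rankBy n b j) 0 * psbClicks n D b j := by
        rw [← sum_range_atRank_univ b _ (fun k x => ps.getD k 0 * x)]
        exact sum_congr rfl fun k hk => by rw [hcs k (mem_range.1 hk)]
    _ = ∑ j, b j := by simp only [← hbudget]

end Run

theorem psbClicks_mono {b₁ b₂ : Fin n → ℝ} (hb₁ : ∀ j, 0 < b₁ j) (hb₂ : ∀ j, 0 < b₂ j) {i : Fin n}
    (hsame : ∀ j ≠ i, b₁ j = b₂ j) (hle : b₁ i ≤ b₂ i) :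
    psbClicks n D b₁ i ≤ psbClicks n D b₂ i := by
  set c := psbClicks n D b₁
  set d := psbClicks n D b₂
  have hc := psbClicks_pos hD hDnn hpos hb₁
  have hd := psbClicks_pos hD hDnn hpos hb₂
  have I₁ := sum_div_psbClicks_mul_le hD hDnn hpos hb₁ d (sum_psbClicks_le hD hDnn hpos hb₂)
  have I₂ := sum_div_psbClicks_mul_le hD hDnn hpos hb₂ c (sum_psbClicks_le hD hDnn hpos hb₁)
  by_contra! hlt
  have hterm : ∀ j, 0 ≤ b₁ j / c j * d j + b₂ j / d j * c j - b₁ j - b₂ j := fun j => by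
    rcases eq_or_ne j i with rfl | hj
    · exact (exchange_term_pos (hb₁ j) hle (hd j) hlt).le
    · rw [← hsame j hj]
      exact exchange_term_nonneg (hb₁ j).le (hc j) (hd j)
  have hsum := sum_pos' (fun j _ => hterm j)
    ⟨i, mem_univ i, exchange_term_pos (hb₁ i) hle (hd i) hlt⟩
  simp only [sum_sub_distrib, sum_add_distrib] at hsum
  linarith

end Bidders

lemma psbClicks_eq_zero_of_rates_eq_zero {n : ℕ} {D : Fin n → ℝ} (hD : ∀ j, D j = 0)
    (b : Fin n → ℝ) (j : Fin n) : psbClicks n D b j = 0 := by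
  obtain ⟨m, rfl⟩ : ∃ m, n = m + 1 := ⟨n - 1, by have := j.pos; omega⟩
  have hzero : ((slotRates D).take (sortedBudgets b).length).sum ≤ 0 :=
    (List.sum_eq_zero fun d hd => by
      obtain ⟨k, -, rfl⟩ := List.mem_map.1 (List.mem_of_mem_take hd)
      exact hD k).le
  have hne : sortedBudgets b ≠ [] := List.ne_nil_of_length_pos (by simp [length_sortedBudgets])
  rw [psbClicks_eq, psbList, length_sortedBudgets, psbAux, if_neg hne, if_pos hzero]
  simp [List.getD_eq_getElem?_getD]

section Utility

variable {n : ℕ} {D : Fin n → ℝ} {Btrue : ℝ} {bud : Fin n → ℝ} {i : Fin n}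

lemma psbUtil_of_le (h : bud i ≤ Btrue) : psbUtil n D Btrue bud i = psbClicks n D bud i :=
  if_pos (Or.inr h)

lemma psbUtil_le_zero_of_lt (h : Btrue < bud i) : psbUtil n D Btrue bud i ≤ 0 := by
  unfold psbUtil
  split_ifs with hc
  · rcases hc with hc | hc
    · simp [hc]
    · exact absurd hc h.not_ge
  · exact bot_le

end Utility

end PSB

open PSB in
/-- The multiple-slot, budgets-only price-setting mechanism is truthful:
whatever positive budgets the other bidders declare, declaring the true budget
`B i` gives bidder `i` utility at least that of any other declared budget
`B' > 0`. -/
theorem psb_multi_slot_truthful (n : ℕ) (D : Fin n → ℝ)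
    (hD : StrictAnti D) (hD0 : ∀ j, 0 ≤ D j)
    (B : Fin n → ℝ) (hB : ∀ j, 0 < B j)
    (i : Fin n) (bud : Fin n → ℝ) (hbud : ∀ j, 0 < bud j)
    (B' : ℝ) (hB' : 0 < B') :
    psbUtil n D (B i) (Function.update bud i B') i ≤
      psbUtil n D (B i) (Function.update bud i (B i)) i := by
  have hupd : ∀ x, 0 < x → ∀ j, 0 < Function.update bud i x j := fun x hx j => by
    rcases eq_or_ne j i with rfl | hj
    · simpa using hx
    · simpa [hj] using hbud j
  rw [psbUtil_of_le (bud := Function.update bud i (B i)) (by simp)]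
  by_cases hpos : ∃ j, 0 < D j
  · rcases le_or_gt B' (B i) with hle | hlt
    · rw [psbUtil_of_le (by simpa), EReal.coe_le_coe_iff]
      exact psbClicks_mono hD hD0 hpos (hupd B' hB') (hupd _ (hB i))
        (fun j hj => by simp [hj]) (by simpa)
    · exact (psbUtil_le_zero_of_lt (bud := Function.update bud i B') (by simpa)).trans
        (EReal.coe_nonneg.2 (psbClicks_pos hD hD0 hpos (hupd _ (hB i)) i).le)
  · push Not at hpos
    have hzero : ∀ j, D j = 0 := fun j => (hpos j).antisymm (hD0 j)
    simp [psbUtil, psbClicks_eq_zero_of_rates_eq_zero hzero]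
end
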